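/- arXiv:1912.08452 — 11 statements merged into one kernel-verified Lean document; each statement's English description precedes it below -/
import Mathlib

section
/- Let m ≥ 1, let A and B be positive definite m×m complex matrices, let λ ∈ [0,1], and let X be any m×m complex matrix. Then the integral Y := ∫_0^∞ exp(−x(1−λ)A⁻¹) · X · exp(−xλB⁻¹) dx converges (the integrand is Bochner integrable on (0,∞)), and Y satisfies the equation (1−λ)A⁻¹Y + λYB⁻¹ = X; moreover Y is the unique solution of this equation. -/
/-!
Write `T Z = a P Z + b Z Q` and `F_Z(t) = exp(-taP) Z exp(-tbQ)`. Then `F_Z' = -T F_Z = -F_{T Z}`,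
so the fundamental theorem of calculus on `(0, ∞)` gives `∫₀^∞ F_{T Z} = F_Z(0) = Z`, i.e. the
integral is a left inverse of `T`. It is also a right inverse, because `T` is linear and commutes
with the flow. Integrability and decay come from the spectral decomposition
`exp(-tP) = ∑ₖ exp(-tλₖ) Eₖ`, which writes `F_Z` as a finite sum of exponentials
`exp(-t(aλₖ + bμₗ))` whose rates are positive for positive definite `P`, `Q`.
-/

open MeasureTheory Matrix NormedSpace
open scoped ComplexOrder

attribute [local instance] Matrix.normedAddCommGroup Matrix.normedSpace

theorem mul_add_mul_pos {a b p q : ℝ} (ha : 0 ≤ a) (hb : 0 ≤ b) (hab : 0 < a + b)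
    (hp : 0 < p) (hq : 0 < q) : 0 < a * p + b * q := by
  rcases ha.eq_or_lt with rfl | ha
  · simpa using mul_pos (by simpa using hab) hq
  · exact add_pos_of_pos_of_nonneg (mul_pos ha hp) (mul_nonneg hb hq.le)

theorem commute_exp_real_smul_self {𝔸 : Type*} [Ring 𝔸] [Algebra ℝ 𝔸] [TopologicalSpace 𝔸]
    [IsTopologicalRing 𝔸] [T2Space 𝔸] (x : 𝔸) (s : ℝ) : Commute x (exp (s • x)) :=
  ((Commute.refl x).smul_right s).exp_right

namespace Matrix.IsHermitian

variable {n : Type*} [Fintype n] [DecidableEq n] {H : Matrix n n ℂ}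

noncomputable def eigenvectorProj (hH : H.IsHermitian) (k : n) : Matrix n n ℂ :=
  (hH.eigenvectorUnitary : Matrix n n ℂ) * single k k 1 *
    star (hH.eigenvectorUnitary : Matrix n n ℂ)

theorem sum_smul_eigenvectorProj (hH : H.IsHermitian) (d : n → ℝ) :
    ∑ k, d k • hH.eigenvectorProj k = (hH.eigenvectorUnitary : Matrix n n ℂ) *
      diagonal (fun k => (d k : ℂ)) * star (hH.eigenvectorUnitary : Matrix n n ℂ) := by
  have hterm (k : n) : d k • hH.eigenvectorProj k = (hH.eigenvectorUnitary : Matrix n n ℂ) *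
      single k k (d k : ℂ) * star (hH.eigenvectorUnitary : Matrix n n ℂ) := by
    rw [eigenvectorProj, ← Complex.coe_smul, ← Matrix.smul_mul, ← Matrix.mul_smul, smul_single,
      smul_eq_mul, mul_one]
  simp only [hterm, ← Finset.sum_mul, ← Finset.mul_sum, sum_single_eq_diagonal]

theorem exp_real_smul_eq_sum (hH : H.IsHermitian) (s : ℝ) :
    NormedSpace.exp (s • H) = ∑ k, Real.exp (s * hH.eigenvalues k) • hH.eigenvectorProj k := by
  set U : Matrix n n ℂ := (hH.eigenvectorUnitary : Matrix n n ℂ)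
  have hU : IsUnit U := Unitary.isUnit_coe
  have hUinv : U⁻¹ = star U :=
    inv_eq_left_inv (mem_unitaryGroup_iff'.mp hH.eigenvectorUnitary.2)
  have hsH : s • H = U * diagonal (fun k => ((s * hH.eigenvalues k : ℝ) : ℂ)) * U⁻¹ := by
    conv_lhs => rw [hH.spectral_theorem, Unitary.conjStarAlgAut_apply]
    rw [hUinv, ← Matrix.smul_mul, ← Matrix.mul_smul, ← diagonal_smul]
    congr 3
    ext k
    simp
  rw [hsH, Matrix.exp_conj U _ hU, exp_diagonal, hUinv, sum_smul_eigenvectorProj]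
  congr 3
  funext k
  simp [Complex.ofReal_exp, Complex.exp_eq_exp_ℂ]

end Matrix.IsHermitian

section Sylvester

variable {n : Type*} [Fintype n]

noncomputable def sylvesterOp (a b : ℝ) (P Q : Matrix n n ℂ) :
    Matrix n n ℂ →ₗ[ℝ] Matrix n n ℂ :=
  a • LinearMap.mulLeft ℝ P + b • LinearMap.mulRight ℝ Q

@[simp]
theorem sylvesterOp_apply (a b : ℝ) (P Q Z : Matrix n n ℂ) :
    sylvesterOp a b P Q Z = a • (P * Z) + b • (Z * Q) :=
  rfl

variable [DecidableEq n]

noncomputable def sylvesterFlow (a b : ℝ) (P Q Z : Matrix n n ℂ) (x : ℝ) : Matrix n n ℂ :=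
  exp ((-(x * a) : ℝ) • P) * Z * exp ((-(x * b) : ℝ) • Q)

variable {a b : ℝ} {P Q : Matrix n n ℂ}

@[simp]
theorem sylvesterFlow_zero (Z : Matrix n n ℂ) : sylvesterFlow a b P Q Z 0 = Z := by
  simp [sylvesterFlow]

theorem sylvesterFlow_sylvesterOp (Z : Matrix n n ℂ) (x : ℝ) :
    sylvesterFlow a b P Q (sylvesterOp a b P Q Z) x =
      sylvesterOp a b P Q (sylvesterFlow a b P Q Z x) := by
  have hP := (commute_exp_real_smul_self P (-(x * a))).eq
  have hQ := (commute_exp_real_smul_self Q (-(x * b))).eq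
  simp only [sylvesterFlow, sylvesterOp_apply, Matrix.mul_add, Matrix.add_mul, mul_smul_comm,
    smul_mul_assoc, ← mul_assoc, ← hP]
  simp only [mul_assoc, hQ]

-- `exp` is differentiated in the operator norm, which makes matrices a normed algebra;
-- `HasDerivAt` only sees the topology, which is the same for every matrix norm.
open scoped Matrix.Norms.Operator in
theorem hasDerivAt_sylvesterFlow (Z : Matrix n n ℂ) (x : ℝ) :
    HasDerivAt (sylvesterFlow a b P Q Z) (-sylvesterOp a b P Q (sylvesterFlow a b P Q Z x)) x := by
  have hexp (M : Matrix n n ℂ) (c : ℝ) : HasDerivAt (fun y : ℝ => exp ((-(y * c) : ℝ) • M))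
      ((-c) • (M * exp ((-(x * c) : ℝ) • M))) x :=
    (hasDerivAt_exp_smul_const' M _).scomp x (hasDerivAt_mul_const c).neg
  refine (((hexp P a).mul_const Z).mul (hexp Q b)).congr_deriv ?_
  rw [(commute_exp_real_smul_self Q (-(x * b))).eq]
  simp only [sylvesterFlow, sylvesterOp_apply, neg_smul, smul_mul_assoc, mul_smul_comm, mul_neg,
    neg_mul, neg_add, mul_assoc]

theorem sylvesterFlow_eq_sum (hP : P.IsHermitian) (hQ : Q.IsHermitian) (Z : Matrix n n ℂ)
    (x : ℝ) :
    sylvesterFlow a b P Q Z x = ∑ k, ∑ l,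
      Real.exp (-(a * hP.eigenvalues k + b * hQ.eigenvalues l) * x) •
        (hP.eigenvectorProj k * Z * hQ.eigenvectorProj l) := by
  rw [sylvesterFlow, hP.exp_real_smul_eq_sum, hQ.exp_real_smul_eq_sum, Finset.sum_mul,
    Finset.sum_mul]
  refine Finset.sum_congr rfl fun k _ => ?_
  rw [Finset.mul_sum]
  refine Finset.sum_congr rfl fun l _ => ?_
  rw [smul_mul_assoc, smul_mul_assoc, mul_smul_comm, smul_smul, ← Real.exp_add]
  ring_nf

variable (hP : P.PosDef) (hQ : Q.PosDef) (ha : 0 ≤ a) (hb : 0 ≤ b) (hab : 0 < a + b)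
include hP hQ ha hb hab

-- The `ContinuousENorm` instance has to be named: instance search does not find it, since the
-- topology of `Matrix` and the one induced by the entrywise norm agree only up to unfolding.
theorem integrableOn_sylvesterFlow (Z : Matrix n n ℂ) :
    @IntegrableOn _ _ _ _ SeminormedAddGroup.toContinuousENorm
      (sylvesterFlow a b P Q Z) (Set.Ioi 0) volume := by
  rw [funext (sylvesterFlow_eq_sum hP.1 hQ.1 Z)]
  refine integrable_finsetSum _ fun k _ =>
    integrable_finsetSum _ fun l _ => ?_
  exact (exp_neg_integrableOn_Ioi 0
    (mul_add_mul_pos ha hb hab (hP.eigenvalues_pos k) (hQ.eigenvalues_pos l))).smul_const _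

theorem tendsto_sylvesterFlow_atTop (Z : Matrix n n ℂ) :
    Filter.Tendsto (sylvesterFlow a b P Q Z) Filter.atTop (nhds 0) := by
  rw [funext (sylvesterFlow_eq_sum hP.1 hQ.1 Z)]
  have hterm (k l : n) : Filter.Tendsto (fun x : ℝ =>
      Real.exp (-(a * hP.1.eigenvalues k + b * hQ.1.eigenvalues l) * x) •
        (hP.1.eigenvectorProj k * Z * hQ.1.eigenvectorProj l)) Filter.atTop (nhds 0) := by
    have hc := mul_add_mul_pos ha hb hab (hP.eigenvalues_pos k) (hQ.eigenvalues_pos l)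
    simpa using (Real.tendsto_exp_comp_nhds_zero.mpr
      ((Filter.tendsto_const_mul_atBot_of_neg (neg_lt_zero.mpr hc)).mpr
        Filter.tendsto_id)).smul_const (hP.1.eigenvectorProj k * Z * hQ.1.eigenvectorProj l)
  simpa using tendsto_finsetSum _ fun k _ => tendsto_finsetSum _ fun l _ => hterm k l

theorem integral_sylvesterFlow_sylvesterOp (Z : Matrix n n ℂ) :
    ∫ x in Set.Ioi 0, sylvesterFlow a b P Q (sylvesterOp a b P Q Z) x = Z := by
  have hderiv (x : ℝ) : HasDerivAt (sylvesterFlow a b P Q Z)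
      (-sylvesterFlow a b P Q (sylvesterOp a b P Q Z) x) x := by
    rw [sylvesterFlow_sylvesterOp]
    exact hasDerivAt_sylvesterFlow Z x
  have hFTC := integral_Ioi_of_hasDerivAt_of_tendsto (hderiv 0).continuousAt.continuousWithinAt
    (fun x _ => hderiv x) (integrableOn_sylvesterFlow hP hQ ha hb hab _).neg
    (tendsto_sylvesterFlow_atTop hP hQ ha hb hab Z)
  rwa [integral_neg, sylvesterFlow_zero, zero_sub, neg_inj] at hFTC

theorem sylvesterOp_integral_sylvesterFlow (X : Matrix n n ℂ) :
    sylvesterOp a b P Q (∫ x in Set.Ioi 0, sylvesterFlow a b P Q X x) = X := by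
  have h := ContinuousLinearMap.integral_comp_comm (LinearMap.toContinuousLinearMap
    (sylvesterOp a b P Q)) (integrableOn_sylvesterFlow hP hQ ha hb hab X)
  calc sylvesterOp a b P Q (∫ x in Set.Ioi 0, sylvesterFlow a b P Q X x)
      = ∫ x in Set.Ioi 0, sylvesterOp a b P Q (sylvesterFlow a b P Q X x) := h.symm
    _ = ∫ x in Set.Ioi 0, sylvesterFlow a b P Q (sylvesterOp a b P Q X) x := by
      simp only [sylvesterFlow_sylvesterOp]
    _ = X := integral_sylvesterFlow_sylvesterOp hP hQ ha hb hab X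

end Sylvester

theorem stmt_0_general (m : ℕ) (A B : Matrix (Fin m) (Fin m) ℂ)
    (hA : A.PosDef) (hB : B.PosDef) (lam : ℝ) (hlam : lam ∈ Set.Icc (0 : ℝ) 1)
    (X : Matrix (Fin m) (Fin m) ℂ) :
    @IntegrableOn _ _ _ _ SeminormedAddGroup.toContinuousENorm
      (fun x : ℝ =>
        NormedSpace.exp ((-(x * (1 - lam)) : ℝ) • A⁻¹) * X *
          NormedSpace.exp ((-(x * lam) : ℝ) • B⁻¹))
      (Set.Ioi (0 : ℝ)) volume ∧
    (((1 - lam : ℝ) : ℂ) •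
        (A⁻¹ * ∫ x in Set.Ioi (0 : ℝ),
          NormedSpace.exp ((-(x * (1 - lam)) : ℝ) • A⁻¹) * X *
            NormedSpace.exp ((-(x * lam) : ℝ) • B⁻¹)) +
      ((lam : ℝ) : ℂ) •
        ((∫ x in Set.Ioi (0 : ℝ),
          NormedSpace.exp ((-(x * (1 - lam)) : ℝ) • A⁻¹) * X *
            NormedSpace.exp ((-(x * lam) : ℝ) • B⁻¹)) * B⁻¹) = X) ∧
    ∀ Z : Matrix (Fin m) (Fin m) ℂ,
      ((1 - lam : ℝ) : ℂ) • (A⁻¹ * Z) + ((lam : ℝ) : ℂ) • (Z * B⁻¹) = X →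
      Z = ∫ x in Set.Ioi (0 : ℝ),
            NormedSpace.exp ((-(x * (1 - lam)) : ℝ) • A⁻¹) * X *
              NormedSpace.exp ((-(x * lam) : ℝ) • B⁻¹) := by
  have ha : 0 ≤ 1 - lam := sub_nonneg.mpr hlam.2
  have hab : 0 < 1 - lam + lam := by simp
  simp only [Complex.coe_smul]
  refine ⟨integrableOn_sylvesterFlow hA.inv hB.inv ha hlam.1 hab X,
    sylvesterOp_integral_sylvesterFlow hA.inv hB.inv ha hlam.1 hab X, fun Z hZ => ?_⟩
  rw [← hZ]
  exact (integral_sylvesterFlow_sylvesterOp hA.inv hB.inv ha hlam.1 hab Z).symm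

/-- For positive definite `A B : Matrix (Fin m) (Fin m) ℂ`, `λ ∈ [0,1]`
and any `X`, the integral `Y = ∫_0^∞ exp(−x(1−λ)A⁻¹) X exp(−xλB⁻¹) dx` converges
(Bochner integrability on `(0,∞)`), satisfies `(1−λ)A⁻¹Y + λYB⁻¹ = X`, and is the
unique solution of this equation. -/
theorem stmt_0 (m : ℕ) (hm : 1 ≤ m) (A B : Matrix (Fin m) (Fin m) ℂ)
    (hA : A.PosDef) (hB : B.PosDef) (lam : ℝ) (hlam : lam ∈ Set.Icc (0 : ℝ) 1)
    (X : Matrix (Fin m) (Fin m) ℂ) :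
    @IntegrableOn _ _ _ _ SeminormedAddGroup.toContinuousENorm
      (fun x : ℝ =>
        NormedSpace.exp ((-(x * (1 - lam)) : ℝ) • A⁻¹) * X *
          NormedSpace.exp ((-(x * lam) : ℝ) • B⁻¹))
      (Set.Ioi (0 : ℝ)) volume ∧
    (((1 - lam : ℝ) : ℂ) •
        (A⁻¹ * ∫ x in Set.Ioi (0 : ℝ),
          NormedSpace.exp ((-(x * (1 - lam)) : ℝ) • A⁻¹) * X *
            NormedSpace.exp ((-(x * lam) : ℝ) • B⁻¹)) +
      ((lam : ℝ) : ℂ) •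
        ((∫ x in Set.Ioi (0 : ℝ),
          NormedSpace.exp ((-(x * (1 - lam)) : ℝ) • A⁻¹) * X *
            NormedSpace.exp ((-(x * lam) : ℝ) • B⁻¹)) * B⁻¹) = X) ∧
    ∀ Z : Matrix (Fin m) (Fin m) ℂ,
      ((1 - lam : ℝ) : ℂ) • (A⁻¹ * Z) + ((lam : ℝ) : ℂ) • (Z * B⁻¹) = X →
      Z = ∫ x in Set.Ioi (0 : ℝ),
            NormedSpace.exp ((-(x * (1 - lam)) : ℝ) • A⁻¹) * X *
              NormedSpace.exp ((-(x * lam) : ℝ) • B⁻¹) :=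
  stmt_0_general m A B hA hB lam hlam X
end

section
/- Let m ≥ 1 and let A, B be positive definite m×m complex matrices with spectral decompositions A = Σ_{i=1}^{k} s_i E_i and B = Σ_{j=1}^{l} t_j F_j, where s_i, t_j > 0, the E_i (resp. F_j) are Hermitian idempotent matrices (orthogonal projections) satisfying E_iE_{i'} = 0 for i ≠ i', F_jF_{j'} = 0 for j ≠ j', Σ_i E_i = I and Σ_j F_j = I. Let μ be a probability measure on [0,1]. Then for every m×m complex matrix X, ∫_{[0,1]} ( ∫_0^∞ exp(−x(1−λ)A⁻¹) · X · exp(−xλB⁻¹) dx ) dμ(λ) = Σ_{i=1}^{k} Σ_{j=1}^{l} P_μ(s_i, t_j) E_i X F_j, where P_μ(s,t) := ∫_{[0,1]} ((1−λ)s⁻¹ + λt⁻¹)⁻¹ dμ(λ) for s,t > 0. -/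
/-!
Writing `A = ∑ sᵢ Eᵢ` and `B = ∑ tⱼ Fⱼ` with complete orthogonal idempotents, the map
`c ↦ ∑ cᵢ Eᵢ` is multiplicative, so it commutes with inversion and with the exponential series.
Hence the integrand is `∑ᵢⱼ exp (-((1 - λ)/sᵢ + λ/tⱼ) x) • Eᵢ X Fⱼ`, the `x`-integral of
`exp (-d x)` over `(0, ∞)` is `1/d`, and the `λ`-integral is then taken term by term.
-/

open MeasureTheory Matrix
open scoped ComplexOrder

attribute [local instance] Matrix.normedAddCommGroup Matrix.normedSpace

section Idempotents

variable {ι 𝕜 R : Type*} [Fintype ι] {e : ι → R}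

theorem OrthogonalIdempotents.sum_smul_mul_sum_smul [CommSemiring 𝕜] [Semiring R] [Algebra 𝕜 R]
    (he : OrthogonalIdempotents e) (a b : ι → 𝕜) :
    (∑ i, a i • e i) * (∑ i, b i • e i) = ∑ i, (a i * b i) • e i := by
  classical
  simp_rw [Finset.sum_mul_sum, smul_mul_smul_comm, he.mul_eq, smul_ite, smul_zero,
    Finset.sum_ite_eq, Finset.mem_univ, if_true]

theorem CompleteOrthogonalIdempotents.sum_smul_pow [CommSemiring 𝕜] [Semiring R] [Algebra 𝕜 R]
    (he : CompleteOrthogonalIdempotents e) (c : ι → 𝕜) (n : ℕ) :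
    (∑ i, c i • e i) ^ n = ∑ i, c i ^ n • e i := by
  induction n with
  | zero => simp [he.complete]
  | succ n ih => simp_rw [pow_succ, ih, he.sum_smul_mul_sum_smul]

theorem CompleteOrthogonalIdempotents.exp_sum_smul [RCLike 𝕜] [Ring R] [Algebra 𝕜 R]
    [TopologicalSpace R] [IsTopologicalRing R] [ContinuousSMul 𝕜 R] [T2Space R]
    (he : CompleteOrthogonalIdempotents e) (c : ι → 𝕜) :
    NormedSpace.exp (∑ i, c i • e i) = ∑ i, NormedSpace.exp (c i) • e i := by
  rw [NormedSpace.exp_eq_tsum 𝕜]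
  refine HasSum.tsum_eq ?_
  simp_rw [he.sum_smul_pow, Finset.smul_sum, smul_smul]
  refine hasSum_sum fun i _ => ?_
  simpa only [smul_eq_mul] using
    (NormedSpace.exp_series_hasSum_exp' (𝕂 := 𝕜) (c i)).smul_const (e i)

theorem CompleteOrthogonalIdempotents.inv_sum_smul {n : Type*} [Fintype n] [DecidableEq n]
    [Field 𝕜] {α : Type*} [CommRing α] [Algebra 𝕜 α] {e : ι → Matrix n n α}
    (he : CompleteOrthogonalIdempotents e) {c : ι → 𝕜} (hc : ∀ i, c i ≠ 0) :
    (∑ i, c i • e i)⁻¹ = ∑ i, (c i)⁻¹ • e i := by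
  refine Matrix.inv_eq_left_inv ?_
  simp_rw [he.sum_smul_mul_sum_smul, inv_mul_cancel₀ (hc _), one_smul, he.complete]

theorem sum_smul_mul_mul_sum_smul {κ : Type*} [Fintype κ] [CommSemiring 𝕜] [Semiring R]
    [Algebra 𝕜 R] (e : ι → R) (f : κ → R) (x : R) (a : ι → 𝕜) (b : κ → 𝕜) :
    (∑ i, a i • e i) * x * (∑ j, b j • f j) = ∑ i, ∑ j, (a i * b j) • (e i * x * f j) := by
  simp_rw [Finset.sum_mul, Finset.mul_sum, smul_mul_assoc, mul_smul_comm, smul_smul]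

end Idempotents

theorem integral_sum_sum_smul_const {α ι κ E : Type*} [MeasurableSpace α] {μ : Measure α}
    [Fintype ι] [Fintype κ] [NormedAddCommGroup E] [NormedSpace ℝ E] [CompleteSpace E]
    {f : ι → κ → α → ℝ} (hf : ∀ i j, Integrable (f i j) μ) (v : ι → κ → E) :
    ∫ a, ∑ i, ∑ j, f i j a • v i j ∂μ = ∑ i, ∑ j, (∫ a, f i j a ∂μ) • v i j := by
  have hint : ∀ i j, Integrable (fun a => f i j a • v i j) μ := fun i j => (hf i j).smul_const _
  rw [integral_finsetSum _ fun i _ => integrable_finsetSum _ fun j _ => hint i j]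
  refine Finset.sum_congr rfl fun i _ => ?_
  rw [integral_finsetSum _ fun j _ => hint i j]
  simp_rw [integral_smul_const]

theorem integral_exp_neg_mul_Ioi_zero {d : ℝ} (hd : 0 < d) :
    ∫ x in Set.Ioi (0 : ℝ), Real.exp (-d * x) = d⁻¹ := by
  rw [integral_exp_mul_Ioi (neg_lt_zero.mpr hd)]
  simp

theorem one_sub_mul_inv_add_mul_inv_pos {s t lam : ℝ} (hs : 0 < s) (ht : 0 < t)
    (hlam : lam ∈ Set.Icc (0 : ℝ) 1) : 0 < (1 - lam) * s⁻¹ + lam * t⁻¹ := by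
  obtain ⟨h0, h1⟩ := hlam
  rcases h1.lt_or_eq with h1 | rfl
  · exact add_pos_of_pos_of_nonneg (mul_pos (sub_pos.mpr h1) (inv_pos.mpr hs))
      (mul_nonneg h0 (inv_pos.mpr ht).le)
  · simpa using ht

section Spectral

variable {n ι κ 𝕂 : Type*} [Fintype n] [DecidableEq n] [Fintype ι] [Fintype κ] [RCLike 𝕂]
  {E : ι → Matrix n n 𝕂} {F : κ → Matrix n n 𝕂} {s : ι → ℝ} {t : κ → ℝ}

theorem exp_smul_inv_mul_mul_exp_smul_inv (hE : CompleteOrthogonalIdempotents E)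
    (hF : CompleteOrthogonalIdempotents F) (hs : ∀ i, s i ≠ 0) (ht : ∀ j, t j ≠ 0)
    (X : Matrix n n 𝕂) (a b : ℝ) :
    NormedSpace.exp (a • (∑ i, s i • E i)⁻¹) * X * NormedSpace.exp (b • (∑ j, t j • F j)⁻¹) =
      ∑ i, ∑ j, Real.exp (a * (s i)⁻¹ + b * (t j)⁻¹) • (E i * X * F j) := by
  simp_rw [hE.inv_sum_smul hs, hF.inv_sum_smul ht, Finset.smul_sum, smul_smul,
    hE.exp_sum_smul, hF.exp_sum_smul, ← Real.exp_eq_exp_ℝ, sum_smul_mul_mul_sum_smul,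
    Real.exp_add]

end Spectral

theorem stmt_1_general (m : ℕ) (A B : Matrix (Fin m) (Fin m) ℂ)
    (k l : ℕ) (s : Fin k → ℝ) (t : Fin l → ℝ)
    (hs : ∀ i, 0 < s i) (ht : ∀ j, 0 < t j)
    (E : Fin k → Matrix (Fin m) (Fin m) ℂ) (F : Fin l → Matrix (Fin m) (Fin m) ℂ)
    (hEidem : ∀ i, E i * E i = E i) (hFidem : ∀ j, F j * F j = F j)
    (hEorth : ∀ i i', i ≠ i' → E i * E i' = 0)
    (hForth : ∀ j j', j ≠ j' → F j * F j' = 0)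
    (hEsum : ∑ i, E i = 1) (hFsum : ∑ j, F j = 1)
    (hAdec : A = ∑ i, (s i : ℂ) • E i) (hBdec : B = ∑ j, (t j : ℂ) • F j)
    (μ : Measure ℝ) [IsProbabilityMeasure μ]
    (X : Matrix (Fin m) (Fin m) ℂ) :
    (∫ lam in Set.Icc (0 : ℝ) 1,
        (∫ x in Set.Ioi (0 : ℝ),
          NormedSpace.exp ((-(x * (1 - lam)) : ℝ) • A⁻¹) * X *
            NormedSpace.exp ((-(x * lam) : ℝ) • B⁻¹)) ∂μ) =
      ∑ i, ∑ j,
        ((∫ lam in Set.Icc (0 : ℝ) 1,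
            ((1 - lam) * (s i)⁻¹ + lam * (t j)⁻¹)⁻¹ ∂μ : ℝ) : ℂ) • (E i * X * F j) := by
  have hE : CompleteOrthogonalIdempotents E := ⟨⟨hEidem, hEorth⟩, hEsum⟩
  have hF : CompleteOrthogonalIdempotents F := ⟨⟨hFidem, hForth⟩, hFsum⟩
  have hA : A = ∑ i, s i • E i := by simp_rw [hAdec, Complex.coe_smul]
  have hB : B = ∑ j, t j • F j := by simp_rw [hBdec, Complex.coe_smul]
  have hd : ∀ lam ∈ Set.Icc (0 : ℝ) 1, ∀ i j, 0 < (1 - lam) * (s i)⁻¹ + lam * (t j)⁻¹ :=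
    fun lam hlam i j => one_sub_mul_inv_add_mul_inv_pos (hs i) (ht j) hlam
  have hinner : ∀ lam ∈ Set.Icc (0 : ℝ) 1,
      ∫ x in Set.Ioi (0 : ℝ), NormedSpace.exp ((-(x * (1 - lam)) : ℝ) • A⁻¹) * X *
          NormedSpace.exp ((-(x * lam) : ℝ) • B⁻¹) =
        ∑ i, ∑ j, ((1 - lam) * (s i)⁻¹ + lam * (t j)⁻¹)⁻¹ • (E i * X * F j) := by
    intro lam hlam
    have hexponent : ∀ (x : ℝ) i j, -(x * (1 - lam)) * (s i)⁻¹ + -(x * lam) * (t j)⁻¹ =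
        -((1 - lam) * (s i)⁻¹ + lam * (t j)⁻¹) * x := fun _ _ _ => by ring
    simp_rw [hA, hB, exp_smul_inv_mul_mul_exp_smul_inv hE hF (fun i => (hs i).ne')
      (fun j => (ht j).ne'), hexponent]
    rw [integral_sum_sum_smul_const
      fun i j => integrableOn_exp_mul_Ioi (neg_lt_zero.mpr (hd lam hlam i j)) 0]
    exact Finset.sum_congr rfl fun i _ => Finset.sum_congr rfl fun j _ => by
      rw [integral_exp_neg_mul_Ioi_zero (hd lam hlam i j)]
  have hintegrable : ∀ i j, IntegrableOn
      (fun lam => ((1 - lam) * (s i)⁻¹ + lam * (t j)⁻¹)⁻¹) (Set.Icc (0 : ℝ) 1) μ :=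
    fun i j => ContinuousOn.integrableOn_compact isCompact_Icc <|
      ContinuousOn.inv₀ (by fun_prop) fun lam hlam => (hd lam hlam i j).ne'
  rw [setIntegral_congr_fun measurableSet_Icc hinner, integral_sum_sum_smul_const hintegrable]
  simp_rw [Complex.coe_smul]

/-- For positive definite matrices `A = Σᵢ sᵢ Eᵢ`, `B = Σⱼ tⱼ Fⱼ`
(spectral decompositions) and a probability measure `μ` on `[0,1]`,
`∫_{[0,1]} (∫_0^∞ exp(−x(1−λ)A⁻¹) X exp(−xλB⁻¹) dx) dμ(λ)
  = Σᵢⱼ P_μ(sᵢ,tⱼ) Eᵢ X Fⱼ`, where `P_μ(s,t) = ∫_{[0,1]} ((1−λ)s⁻¹+λt⁻¹)⁻¹ dμ(λ)`. -/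
theorem stmt_1 (m : ℕ) (hm : 1 ≤ m) (A B : Matrix (Fin m) (Fin m) ℂ)
    (hA : A.PosDef) (hB : B.PosDef)
    (k l : ℕ) (s : Fin k → ℝ) (t : Fin l → ℝ)
    (hs : ∀ i, 0 < s i) (ht : ∀ j, 0 < t j)
    (E : Fin k → Matrix (Fin m) (Fin m) ℂ) (F : Fin l → Matrix (Fin m) (Fin m) ℂ)
    (hEherm : ∀ i, (E i).IsHermitian) (hFherm : ∀ j, (F j).IsHermitian)
    (hEidem : ∀ i, E i * E i = E i) (hFidem : ∀ j, F j * F j = F j)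
    (hEorth : ∀ i i', i ≠ i' → E i * E i' = 0)
    (hForth : ∀ j j', j ≠ j' → F j * F j' = 0)
    (hEsum : ∑ i, E i = 1) (hFsum : ∑ j, F j = 1)
    (hAdec : A = ∑ i, (s i : ℂ) • E i) (hBdec : B = ∑ j, (t j : ℂ) • F j)
    (μ : Measure ℝ) [IsProbabilityMeasure μ] (hμ : μ (Set.Icc (0 : ℝ) 1) = 1)
    (X : Matrix (Fin m) (Fin m) ℂ) :
    (∫ lam in Set.Icc (0 : ℝ) 1,
        (∫ x in Set.Ioi (0 : ℝ),
          NormedSpace.exp ((-(x * (1 - lam)) : ℝ) • A⁻¹) * X *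
            NormedSpace.exp ((-(x * lam) : ℝ) • B⁻¹)) ∂μ) =
      ∑ i, ∑ j,
        ((∫ lam in Set.Icc (0 : ℝ) 1,
            ((1 - lam) * (s i)⁻¹ + lam * (t j)⁻¹)⁻¹ ∂μ : ℝ) : ℂ) • (E i * X * F j) :=
  stmt_1_general m A B k l s t hs ht E F hEidem hFidem hEorth hForth hEsum hFsum hAdec hBdec μ X
end

section
/- Let m ≥ 1 and let T be an invertible m×m complex matrix with polar decomposition T = U·P, where U is unitary and P = (T*T)^{1/2} has spectral decomposition P = Σ_{i=1}^{k} s_i E_i with pairwise distinct s_i > 0 and Hermitian idempotent matrices E_i satisfying E_iE_j = 0 for i ≠ j and Σ_i E_i = I. Let μ be a probability measure on [0,1] such that ∫_{[0,1]} λ dμ(λ) ∈ (0,1), and define Δ_μ(T) := Σ_{i,j=1}^{k} P_μ(s_i, s_j) E_i U E_j, where P_μ(s,t) := ∫_{[0,1]} ((1−λ)s⁻¹ + λt⁻¹)⁻¹ dμ(λ). Then Δ_μ(T) = T if and only if T is normal (i.e., T*T = TT*). -/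
/-!
Put `X i j := E i * U * E j`. Since `∑ E i = 1`, both `T = U P` and `Δ_μ(T)` are block sums
`∑ c i j • X i j` (with `c i j = s j`, resp. `P_μ(s i, s j)`), and since the `E i` are orthogonal
idempotents a block sum determines each `c i j • X i j` as `E i * _ * E j`. Now `P_μ(s, s) = s`,
while for `a ≠ b` one has `b - P_μ(a, b) = (b - a) ∫ (1 - λ) b / ((1 - λ) b + λ a) dμ`, and the
integral is positive because `∫ (1 - λ) dμ > 0`. Hence `Δ_μ(T) = T` iff `X i j = 0` for `i ≠ j`.
On the other hand `T` is normal iff `P² U = U P²`, i.e. iff the block sums with coefficients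
`s i ^ 2` and `s j ^ 2` agree, which (the `s i ^ 2` being distinct) is the same condition.
-/

open MeasureTheory Matrix Set
open scoped ComplexOrder

section BlockSum

variable {R A ι : Type*} [CommRing R] [Ring A] [Algebra R A] [Fintype ι]

def blockSum (U : A) (E : ι → A) (c : ι → ι → R) : A :=
  ∑ i, ∑ j, c i j • (E i * U * E j)

variable {U : A} {E : ι → A}

lemma OrthogonalIdempotents.mul_blockSum_mul (hE : OrthogonalIdempotents E)
    (c : ι → ι → R) (a b : ι) :
    E a * blockSum U E c * E b = c a b • (E a * U * E b) := by
  classical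
  have hassoc : ∀ i j, E a * (E i * U * E j) * E b = E a * E i * U * (E j * E b) := by
    simp only [mul_assoc, implies_true]
  simp only [blockSum, Finset.mul_sum, Finset.sum_mul, mul_smul_comm, smul_mul_assoc, hassoc,
    hE.mul_eq, ite_mul, mul_ite, zero_mul, mul_zero, smul_ite, smul_zero, Finset.sum_ite_eq,
    Finset.sum_ite_eq', Finset.mem_univ, if_true]

lemma OrthogonalIdempotents.blockSum_eq_blockSum_iff [IsDomain R] [Module.IsTorsionFree R A]
    (hE : OrthogonalIdempotents E) {c d : ι → ι → R} :
    blockSum U E c = blockSum U E d ↔ ∀ a b, c a b ≠ d a b → E a * U * E b = 0 := by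
  refine ⟨fun h a b hab => ?_, fun h => ?_⟩
  · have hcd : c a b • (E a * U * E b) = d a b • (E a * U * E b) := by
      rw [← hE.mul_blockSum_mul, ← hE.mul_blockSum_mul, h]
    exact (smul_eq_zero.1 (by rw [sub_smul, hcd, sub_self])).resolve_left (sub_ne_zero.2 hab)
  · refine Finset.sum_congr rfl fun a _ => Finset.sum_congr rfl fun b _ => ?_
    by_cases hab : c a b = d a b
    · rw [hab]
    · rw [h a b hab, smul_zero, smul_zero]

lemma sum_smul_mul_eq_blockSum (hE : ∑ i, E i = 1) (c : ι → R) :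
    (∑ i, c i • E i) * U = blockSum U E fun i _ => c i := by
  simp only [blockSum, ← Finset.smul_sum, ← Finset.mul_sum, hE, mul_one, Finset.sum_mul,
    smul_mul_assoc]

lemma mul_sum_smul_eq_blockSum (hE : ∑ i, E i = 1) (c : ι → R) :
    U * (∑ j, c j • E j) = blockSum U E fun _ j => c j := by
  rw [blockSum, Finset.sum_comm]
  simp only [← Finset.smul_sum, ← Finset.sum_mul, hE, one_mul, Finset.mul_sum, mul_smul_comm]

lemma OrthogonalIdempotents.sum_smul_mul_sum_smul_s2 (hE : OrthogonalIdempotents E) (c d : ι → R) :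
    (∑ i, c i • E i) * (∑ i, d i • E i) = ∑ i, (c i * d i) • E i := by
  classical
  simp only [Finset.sum_mul_sum, smul_mul_smul_comm, hE.mul_eq, smul_ite, smul_zero,
    Finset.sum_ite_eq, Finset.mem_univ, if_true]

end BlockSum

lemma star_mul_self_eq_mul_star_iff_of_mem_unitary {R : Type*} [Monoid R] [StarMul R] {U P : R}
    (hU : U ∈ unitary R) (hP : IsSelfAdjoint P) :
    star (U * P) * (U * P) = U * P * star (U * P) ↔ P * P * U = U * (P * P) := by
  have hstar : star (U * P) = P * star U := by rw [star_mul, hP.star_eq]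
  have hleft : star (U * P) * (U * P) = P * P := by
    rw [hstar, mul_assoc, ← mul_assoc (star U), Unitary.star_mul_self_of_mem hU, one_mul]
  rw [hleft, hstar]
  constructor
  · intro h
    calc P * P * U = U * P * (P * star U) * U := by rw [← h]
      _ = U * (P * P) := by
        rw [mul_assoc, mul_assoc P, Unitary.star_mul_self_of_mem hU, mul_one, ← mul_assoc,
          mul_assoc U]
  · intro h
    calc P * P = P * P * U * star U := by
          rw [mul_assoc _ U, Unitary.mul_star_self_of_mem hU, mul_one]
      _ = U * P * (P * star U) := by rw [h]; simp only [mul_assoc]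

noncomputable def meanPerspective (μ : Measure ℝ) (s t : ℝ) : ℝ :=
  ∫ lam in Icc (0 : ℝ) 1, ((1 - lam) * s⁻¹ + lam * t⁻¹)⁻¹ ∂μ

lemma one_sub_mul_add_mul_pos {a b lam : ℝ} (ha : 0 < a) (hb : 0 < b)
    (hlam : lam ∈ Icc (0 : ℝ) 1) :
    0 < (1 - lam) * b + lam * a := by
  obtain ⟨h0, h1⟩ := hlam
  rcases h0.eq_or_lt with rfl | h0
  · simpa using hb
  · exact add_pos_of_nonneg_of_pos (mul_nonneg (by linarith) hb.le) (mul_pos h0 ha)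

lemma sub_inv_one_sub_mul_inv_add_mul_inv {a b lam : ℝ} (ha : 0 < a) (hb : 0 < b)
    (hlam : lam ∈ Icc (0 : ℝ) 1) :
    b - ((1 - lam) * a⁻¹ + lam * b⁻¹)⁻¹ =
      (b - a) * ((1 - lam) * b / ((1 - lam) * b + lam * a)) := by
  have hD := (one_sub_mul_add_mul_pos ha hb hlam).ne'
  have hinv : ((1 - lam) * a⁻¹ + lam * b⁻¹)⁻¹ = a * b / ((1 - lam) * b + lam * a) := by
    field_simp
  rw [hinv, mul_div_assoc', eq_div_iff hD, sub_mul, div_mul_cancel₀ _ hD]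
  ring

section MeanPerspective

variable {μ : Measure ℝ}

lemma meanPerspective_self (hμ : μ (Icc 0 1) = 1) (s : ℝ) : meanPerspective μ s s = s := by
  simp [meanPerspective, ← add_mul, measureReal_def, hμ]

variable [IsFiniteMeasure μ]

lemma integral_one_sub_mul_div_pos (hμ : μ (Icc 0 1) = 1)
    (hmean : ∫ lam in Icc (0 : ℝ) 1, lam ∂μ < 1)
    {a b : ℝ} (ha : 0 < a) (hb : 0 < b) :
    0 < ∫ lam in Icc (0 : ℝ) 1, (1 - lam) * b / ((1 - lam) * b + lam * a) ∂μ := by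
  have hcont :
      ContinuousOn (fun lam : ℝ => (1 - lam) * b / ((1 - lam) * b + lam * a)) (Icc 0 1) :=
    ContinuousOn.div (by fun_prop) (by fun_prop) fun lam hlam =>
      (one_sub_mul_add_mul_pos ha hb hlam).ne'
  have hlower : ∀ lam ∈ Icc (0 : ℝ) 1,
      (1 - lam) * (b / (a + b)) ≤ (1 - lam) * b / ((1 - lam) * b + lam * a) := by
    intro lam hlam
    rw [← mul_div_assoc]
    refine div_le_div_of_nonneg_left (mul_nonneg (by linarith [hlam.2]) hb.le)
      (one_sub_mul_add_mul_pos ha hb hlam) ?_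
    nlinarith [hlam.1, hlam.2]
  have hmass : ∫ lam in Icc (0 : ℝ) 1, (1 - lam) ∂μ = 1 - ∫ lam in Icc (0 : ℝ) 1, lam ∂μ := by
    rw [integral_sub (integrable_const _)
      ((continuousOn_id' _).integrableOn_compact isCompact_Icc)]
    simp [measureReal_def, hμ]
  calc (0 : ℝ) < (1 - ∫ lam in Icc (0 : ℝ) 1, lam ∂μ) * (b / (a + b)) := by
        have : 0 < b / (a + b) := by positivity
        nlinarith
    _ = ∫ lam in Icc (0 : ℝ) 1, (1 - lam) * (b / (a + b)) ∂μ := by rw [integral_mul_const, hmass]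
    _ ≤ _ := setIntegral_mono_on
        ((Continuous.continuousOn (by fun_prop)).integrableOn_compact isCompact_Icc)
        (hcont.integrableOn_compact isCompact_Icc) measurableSet_Icc hlower

lemma meanPerspective_ne_right (hμ : μ (Icc 0 1) = 1)
    (hmean : ∫ lam in Icc (0 : ℝ) 1, lam ∂μ < 1)
    {a b : ℝ} (ha : 0 < a) (hb : 0 < b) (hab : a ≠ b) : meanPerspective μ a b ≠ b := by
  have hcont : ContinuousOn (fun lam : ℝ => ((1 - lam) * a⁻¹ + lam * b⁻¹)⁻¹) (Icc 0 1) := by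
    refine ContinuousOn.inv₀ (by fun_prop) fun lam hlam => ?_
    exact (one_sub_mul_add_mul_pos (inv_pos.2 hb) (inv_pos.2 ha) hlam).ne'
  have hgap : b - meanPerspective μ a b =
      (b - a) * ∫ lam in Icc (0 : ℝ) 1, (1 - lam) * b / ((1 - lam) * b + lam * a) ∂μ := by
    rw [meanPerspective, ← integral_const_mul, ← setIntegral_congr_fun measurableSet_Icc
      fun lam hlam => sub_inv_one_sub_mul_inv_add_mul_inv ha hb hlam,
      integral_sub (integrable_const _) (hcont.integrableOn_compact isCompact_Icc)]
    simp [measureReal_def, hμ]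
  intro h
  rw [h, sub_self, eq_comm] at hgap
  exact mul_ne_zero (sub_ne_zero.2 hab.symm) (integral_one_sub_mul_div_pos hμ hmean ha hb).ne' hgap

end MeanPerspective

theorem stmt_2_general (m : ℕ) (T : Matrix (Fin m) (Fin m) ℂ)
    (U P : Matrix (Fin m) (Fin m) ℂ)
    (hU : U ∈ Matrix.unitaryGroup (Fin m) ℂ)
    (hP : P.PosSemidef) (hpolar : T = U * P)
    (k : ℕ) (s : Fin k → ℝ) (hs : ∀ i, 0 < s i) (hsdist : Function.Injective s)
    (E : Fin k → Matrix (Fin m) (Fin m) ℂ)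
    (hEidem : ∀ i, E i * E i = E i)
    (hEorth : ∀ i j, i ≠ j → E i * E j = 0) (hEsum : ∑ i, E i = 1)
    (hPdec : P = ∑ i, (s i : ℂ) • E i)
    (μ : Measure ℝ) [IsProbabilityMeasure μ] (hμ : μ (Set.Icc (0 : ℝ) 1) = 1)
    (hmean : (∫ lam in Set.Icc (0 : ℝ) 1, lam ∂μ) ∈ Set.Ioo (0 : ℝ) 1) :
    (∑ i, ∑ j,
        ((∫ lam in Set.Icc (0 : ℝ) 1,
            ((1 - lam) * (s i)⁻¹ + lam * (s j)⁻¹)⁻¹ ∂μ : ℝ) : ℂ) • (E i * U * E j)) = T ↔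
      Tᴴ * T = T * Tᴴ := by
  have hE : OrthogonalIdempotents E := ⟨hEidem, hEorth⟩
  have hT : T = blockSum U E fun _ j => (s j : ℂ) := by
    rw [hpolar, hPdec, mul_sum_smul_eq_blockSum hEsum]
  have hnormal : Tᴴ * T = T * Tᴴ ↔
      blockSum U E (fun i _ => (s i : ℂ) * s i) = blockSum U E fun _ j => (s j : ℂ) * s j := by
    rw [← star_eq_conjTranspose, hpolar,
      star_mul_self_eq_mul_star_iff_of_mem_unitary hU hP.isHermitian, hPdec,
      hE.sum_smul_mul_sum_smul_s2, sum_smul_mul_eq_blockSum hEsum, mul_sum_smul_eq_blockSum hEsum]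
  have hsq : ∀ a b, (s a : ℂ) * s a = s b * s b ↔ a = b := fun a b => by
    rw [← hsdist.eq_iff, ← mul_self_inj (hs a).le (hs b).le]
    exact_mod_cast Iff.rfl
  have hperspective : ∀ a b, (meanPerspective μ (s a) (s b) : ℂ) = s b ↔ a = b := fun a b => by
    rw [Complex.ofReal_inj]
    refine ⟨fun h => by_contra fun hab => ?_, fun hab => hab ▸ meanPerspective_self hμ (s a)⟩
    exact meanPerspective_ne_right hμ hmean.2 (hs a) (hs b) (hsdist.ne hab) h
  change blockSum U E (fun i j => (meanPerspective μ (s i) (s j) : ℂ)) = T ↔ _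
  rw [hnormal, hT, hE.blockSum_eq_blockSum_iff, hE.blockSum_eq_blockSum_iff]
  simp only [ne_eq, hperspective, hsq]

/-- Let `T = U·P` be the polar decomposition of an invertible matrix,
with `P = (T*T)^{1/2} = Σᵢ sᵢ Eᵢ` a spectral decomposition with pairwise distinct
`sᵢ > 0`.  For a probability measure `μ` on `[0,1]` with `∫ λ dμ ∈ (0,1)`, the
generalized Aluthge transformation `Δ_μ(T) = Σᵢⱼ P_μ(sᵢ,sⱼ) Eᵢ U Eⱼ` satisfies
`Δ_μ(T) = T` iff `T` is normal. -/
theorem stmt_2 (m : ℕ) (hm : 1 ≤ m) (T : Matrix (Fin m) (Fin m) ℂ) (hT : IsUnit T.det)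
    (U P : Matrix (Fin m) (Fin m) ℂ)
    (hU : U ∈ Matrix.unitaryGroup (Fin m) ℂ)
    (hP : P.PosSemidef) (hP2 : P * P = Tᴴ * T) (hpolar : T = U * P)
    (k : ℕ) (s : Fin k → ℝ) (hs : ∀ i, 0 < s i) (hsdist : Function.Injective s)
    (E : Fin k → Matrix (Fin m) (Fin m) ℂ)
    (hEherm : ∀ i, (E i).IsHermitian) (hEidem : ∀ i, E i * E i = E i)
    (hEorth : ∀ i j, i ≠ j → E i * E j = 0) (hEsum : ∑ i, E i = 1)
    (hPdec : P = ∑ i, (s i : ℂ) • E i)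
    (μ : Measure ℝ) [IsProbabilityMeasure μ] (hμ : μ (Set.Icc (0 : ℝ) 1) = 1)
    (hmean : (∫ lam in Set.Icc (0 : ℝ) 1, lam ∂μ) ∈ Set.Ioo (0 : ℝ) 1) :
    (∑ i, ∑ j,
        ((∫ lam in Set.Icc (0 : ℝ) 1,
            ((1 - lam) * (s i)⁻¹ + lam * (s j)⁻¹)⁻¹ ∂μ : ℝ) : ℂ) • (E i * U * E j)) = T ↔
      Tᴴ * T = T * Tᴴ :=
  stmt_2_general m T U P hU hP hpolar k s hs hsdist E hEidem hEorth hEsum hPdec μ hμ hmean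
end

section
/- Let m ≥ 1, let T be an invertible m×m complex matrix, set |T| := (T*T)^{1/2} and U := T·|T|⁻¹ (so T = U|T| is the polar decomposition with U unitary), and let λ ∈ (0,1). Then |T|^{1−λ} · U · |T|^{λ} = T if and only if T is normal (i.e., T*T = TT*). -/
/-!
Write `P = |T|`; it is positive definite because `T` is invertible. Since `P⁻¹ P^λ = P^(λ-1)`,
the λ-weighted Aluthge transform is the conjugate `P^(1-λ) T (P^(1-λ))⁻¹`, so it equals `T` iff
`T` commutes with `P^(1-λ)`. Each of `P^(1-λ)`, `P` and `P² = T*T` is a continuous function of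
the others on their spectra, so this holds iff `T` commutes with `T*T`; cancelling the invertible
`T` in `T (T*T) = (T*T) T` leaves `T T* = T*T`.
-/

open Matrix
open scoped ComplexOrder

namespace Matrix.PosSemidef

/-- The positive semidefinite square root of a positive semidefinite matrix (the definition
removed from Mathlib, restored verbatim). -/
noncomputable def sqrt {n 𝕜 : Type*} [Fintype n] [RCLike 𝕜] [DecidableEq n] {A : Matrix n n 𝕜}
    (hA : PosSemidef A) : Matrix n n 𝕜 :=
  hA.1.eigenvectorUnitary.1 * diagonal ((↑) ∘ (√·) ∘ hA.1.eigenvalues) *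
  (star hA.1.eigenvectorUnitary : Matrix n n 𝕜)

lemma posSemidef_sqrt {n 𝕜 : Type*} [Fintype n] [RCLike 𝕜] [DecidableEq n] {A : Matrix n n 𝕜}
    (hA : PosSemidef A) : PosSemidef hA.sqrt := by
  unfold sqrt
  rw [Matrix.star_eq_conjTranspose]
  refine Matrix.PosSemidef.mul_mul_conjTranspose_same ?_ _
  refine Matrix.PosSemidef.diagonal fun i => ?_
  simp only [Function.comp_apply, Pi.zero_apply]
  exact_mod_cast Real.sqrt_nonneg _

end Matrix.PosSemidef

theorem mul_mul_eq_self_iff_commute {M : Type*} [Monoid M] {x y : M} (hxy : x * y = 1)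
    (hyx : y * x = 1) (b : M) : x * b * y = b ↔ Commute x b := by
  refine ⟨fun h => ?_, fun h => by rw [h.eq, mul_assoc, hxy, mul_one]⟩
  calc x * b = x * b * (y * x) := by rw [hyx, mul_one]
    _ = b * x := by rw [← mul_assoc, h]

theorem commute_mul_left_iff_of_isUnit {M : Type*} [Monoid M] {a b : M} (hb : IsUnit b) :
    Commute (a * b) b ↔ Commute a b := by
  rw [Commute, SemiconjBy, Commute, SemiconjBy, ← mul_assoc b, hb.mul_left_inj]

theorem continuousOn_rpow_const_of_pos {s : Set ℝ} (hs : ∀ x ∈ s, 0 < x) (p : ℝ) :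
    ContinuousOn (fun x : ℝ => x ^ p) s :=
  continuousOn_id.rpow_const fun x hx => Or.inl (hs x hx).ne'

section CFC

variable {A : Type*} [Ring A] [StarRing A] [Algebra ℝ A] [TopologicalSpace A]
  [ContinuousFunctionalCalculus ℝ A IsSelfAdjoint]

theorem commute_cfc_iff_of_leftInvOn [IsTopologicalRing A] [T2Space A] {a b : A} {f g : ℝ → ℝ}
    (hgf : Set.LeftInvOn g f (spectrum ℝ a)) (hf : ContinuousOn f (spectrum ℝ a))
    (hg : ContinuousOn g (f '' spectrum ℝ a)) (ha : IsSelfAdjoint a) :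
    Commute (cfc f a) b ↔ Commute a b := by
  refine ⟨fun h => ?_, fun h => h.cfc_real f⟩
  rw [← cfc_id' ℝ a, ← cfc_congr hgf, ← Function.comp_def, cfc_comp g f a]
  exact h.cfc_real g

theorem commute_mul_self_iff_of_spectrum_nonneg [IsTopologicalRing A] [T2Space A] {a b : A}
    (ha : IsSelfAdjoint a) (hspec : ∀ x ∈ spectrum ℝ a, 0 ≤ x) :
    Commute (a * a) b ↔ Commute a b := by
  rw [← sq, ← cfc_pow_id (R := ℝ) a 2]
  exact commute_cfc_iff_of_leftInvOn (g := Real.sqrt) (fun x hx => Real.sqrt_sq (hspec x hx))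
    (by fun_prop) (by fun_prop) ha

theorem commute_cfc_rpow_iff [IsTopologicalRing A] [T2Space A] {a : A} (ha : IsSelfAdjoint a)
    (hspec : ∀ x ∈ spectrum ℝ a, 0 < x) {r : ℝ} (hr : r ≠ 0) (b : A) :
    Commute (cfc (fun x : ℝ => x ^ r) a) b ↔ Commute a b := by
  refine commute_cfc_iff_of_leftInvOn (g := fun x : ℝ => x ^ r⁻¹)
    (fun x hx => Real.rpow_rpow_inv (hspec x hx).le hr)
    (continuousOn_rpow_const_of_pos hspec r) (continuousOn_rpow_const_of_pos ?_ r⁻¹) ha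
  rintro - ⟨x, hx, rfl⟩
  exact Real.rpow_pos_of_pos (hspec x hx) r

theorem cfc_rpow_mul_cfc_rpow {a : A} (hspec : ∀ x ∈ spectrum ℝ a, 0 < x) (s t : ℝ) :
    cfc (fun x : ℝ => x ^ s) a * cfc (fun x : ℝ => x ^ t) a = cfc (fun x : ℝ => x ^ (s + t)) a := by
  rw [← cfc_mul _ _ a (continuousOn_rpow_const_of_pos hspec s)
    (continuousOn_rpow_const_of_pos hspec t)]
  exact cfc_congr fun x hx => (Real.rpow_add (hspec x hx) s t).symm

theorem cfc_rpow_zero {a : A} (ha : IsSelfAdjoint a) : cfc (fun x : ℝ => x ^ (0 : ℝ)) a = 1 := by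
  simp only [Real.rpow_zero]
  exact cfc_const_one ℝ a

theorem cfc_rpow_one {a : A} (ha : IsSelfAdjoint a) : cfc (fun x : ℝ => x ^ (1 : ℝ)) a = a := by
  simp only [Real.rpow_one, cfc_id' ℝ a]

theorem cfc_rpow_mul_mul_cfc_rpow_eq_self_iff [IsTopologicalRing A] [T2Space A] {a a' : A}
    (ha : IsSelfAdjoint a) (hspec : ∀ x ∈ spectrum ℝ a, 0 < x) (ha' : a' * a = 1) {r : ℝ}
    (hr : r ≠ 1) (b : A) :
    cfc (fun x : ℝ => x ^ (1 - r)) a * (b * a') * cfc (fun x : ℝ => x ^ r) a = b ↔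
      Commute a b := by
  have hinv : a' * cfc (fun x : ℝ => x ^ r) a = cfc (fun x : ℝ => x ^ (r - 1)) a := by
    rw [← add_sub_cancel (1 : ℝ) r, ← cfc_rpow_mul_cfc_rpow hspec, cfc_rpow_one ha, ← mul_assoc,
      ha', one_mul, add_sub_cancel]
  have hxy := cfc_rpow_mul_cfc_rpow hspec (1 - r) (r - 1)
  have hyx := cfc_rpow_mul_cfc_rpow hspec (r - 1) (1 - r)
  rw [sub_add_sub_cancel, sub_self, cfc_rpow_zero ha] at hxy
  rw [sub_add_sub_cancel, sub_self, cfc_rpow_zero ha] at hyx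
  rw [mul_assoc, mul_assoc b, hinv, ← mul_assoc, mul_mul_eq_self_iff_commute hxy hyx,
    commute_cfc_rpow_iff ha hspec (sub_ne_zero.2 hr.symm)]

end CFC

namespace Matrix.PosSemidef

variable {n 𝕜 : Type*} [Fintype n] [DecidableEq n] [RCLike 𝕜] {A : Matrix n n 𝕜}

theorem sqrt_eq_cfc (hA : A.PosSemidef) : hA.sqrt = cfc Real.sqrt A := by
  rw [hA.1.cfc_eq]
  rfl

theorem spectrum_real_nonneg (hA : A.PosSemidef) : ∀ x ∈ spectrum ℝ A, 0 ≤ x := by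
  rw [hA.1.spectrum_real_eq_range_eigenvalues]
  rintro - ⟨i, rfl⟩
  exact hA.eigenvalues_nonneg i

theorem spectrum_real_pos (hA : A.PosSemidef) (hu : IsUnit A) : ∀ x ∈ spectrum ℝ A, 0 < x :=
  fun x hx => (hA.spectrum_real_nonneg x hx).lt_of_ne
    (by rintro rfl; exact spectrum.zero_notMem ℝ hu hx)

theorem sqrt_mul_sqrt (hA : A.PosSemidef) : hA.sqrt * hA.sqrt = A := by
  rw [sqrt_eq_cfc, ← cfc_mul .., cfc_congr fun x hx => Real.mul_self_sqrt
    (hA.spectrum_real_nonneg x hx)]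
  exact cfc_id' ℝ A hA.1

end Matrix.PosSemidef

theorem stmt_3_general (m : ℕ) (T : Matrix (Fin m) (Fin m) ℂ) (hT : IsUnit T.det)
    (lam : ℝ) (hlam : lam ∈ Set.Ioo (0 : ℝ) 1) :
    (Matrix.posSemidef_conjTranspose_mul_self T).posSemidef_sqrt.isHermitian.cfc
        (fun x : ℝ => x ^ (1 - lam)) *
      (T * ((Matrix.posSemidef_conjTranspose_mul_self T).sqrt)⁻¹) *
      (Matrix.posSemidef_conjTranspose_mul_self T).posSemidef_sqrt.isHermitian.cfc
        (fun x : ℝ => x ^ lam) = T ↔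
      Tᴴ * T = T * Tᴴ := by
  set hA := posSemidef_conjTranspose_mul_self T
  have hP : IsSelfAdjoint hA.sqrt := hA.posSemidef_sqrt.isHermitian
  have hdet : IsUnit hA.sqrt.det := by
    refine isUnit_of_mul_isUnit_left (y := hA.sqrt.det) ?_
    rw [← det_mul, hA.sqrt_mul_sqrt, det_mul, det_conjTranspose]
    exact hT.star.mul hT
  have hspec := hA.posSemidef_sqrt.spectrum_real_pos ((isUnit_iff_isUnit_det _).2 hdet)
  rw [← IsHermitian.cfc_eq, ← IsHermitian.cfc_eq,
    cfc_rpow_mul_mul_cfc_rpow_eq_self_iff hP hspec (nonsing_inv_mul _ hdet) hlam.2.ne,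
    ← commute_mul_self_iff_of_spectrum_nonneg hP fun x hx => (hspec x hx).le, hA.sqrt_mul_sqrt,
    commute_mul_left_iff_of_isUnit ((isUnit_iff_isUnit_det T).2 hT)]
  exact Iff.rfl

/-- For an invertible matrix `T` with polar decomposition `T = U|T|`
(`|T| = (T*T)^{1/2}`, `U = T|T|⁻¹`) and `λ ∈ (0,1)`, the λ-weighted Aluthge
transformation satisfies `|T|^{1−λ} U |T|^{λ} = T` iff `T` is normal.  Real powers of
`|T|` are taken via the (continuous) functional calculus for Hermitian matrices. -/
theorem stmt_3 (m : ℕ) (hm : 1 ≤ m) (T : Matrix (Fin m) (Fin m) ℂ) (hT : IsUnit T.det)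
    (lam : ℝ) (hlam : lam ∈ Set.Ioo (0 : ℝ) 1) :
    (Matrix.posSemidef_conjTranspose_mul_self T).posSemidef_sqrt.isHermitian.cfc
        (fun x : ℝ => x ^ (1 - lam)) *
      (T * ((Matrix.posSemidef_conjTranspose_mul_self T).sqrt)⁻¹) *
      (Matrix.posSemidef_conjTranspose_mul_self T).posSemidef_sqrt.isHermitian.cfc
        (fun x : ℝ => x ^ lam) = T ↔
      Tᴴ * T = T * Tᴴ :=
  stmt_3_general m T hT lam hlam
end

section
/- Let m ≥ 1 and let T be an invertible m×m complex matrix with polar decomposition T = U·P, where U is unitary and P = (T*T)^{1/2} has spectral decomposition P = Σ_{i=1}^{k} s_i E_i with s_i > 0 and Hermitian idempotent matrices E_i satisfying E_iE_j = 0 for i ≠ j and Σ_i E_i = I. Let φ : ℝ_{>0} × ℝ_{>0} → ℂ be any function satisfying φ(s,s) = s for all s > 0. Then trace( Σ_{i,j=1}^{k} φ(s_i, s_j) E_i U E_j ) = trace(T). -/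
open Matrix
open scoped ComplexOrder

/-!
Compressing by orthogonal idempotents kills the off-diagonal blocks in trace:
`tr (Eᵢ U Eⱼ) = tr (U Eⱼ Eᵢ)` vanishes for `i ≠ j` and equals `tr (U Eᵢ)` for `i = j`.
Hence only the diagonal values `φ(sᵢ, sᵢ) = sᵢ` survive, and
`Σᵢ sᵢ tr (U Eᵢ) = tr (U P) = tr T`.
-/

namespace Matrix

variable {ι n R : Type*} [DecidableEq ι] [Fintype n] [CommSemiring R]

theorem trace_mul_mul_of_orthogonal_idempotents {E : ι → Matrix n n R}
    (hidem : ∀ i, E i * E i = E i) (horth : ∀ i j, i ≠ j → E i * E j = 0)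
    (A : Matrix n n R) (i j : ι) :
    trace (E i * A * E j) = if i = j then trace (A * E i) else 0 := by
  rw [trace_mul_comm, ← Matrix.mul_assoc]
  split_ifs with h
  · subst h
    rw [hidem, trace_mul_comm]
  · rw [horth j i (Ne.symm h), Matrix.zero_mul, trace_zero]

theorem trace_sum_smul_mul_mul_of_orthogonal_idempotents [Fintype ι] {E : ι → Matrix n n R}
    (hidem : ∀ i, E i * E i = E i) (horth : ∀ i j, i ≠ j → E i * E j = 0)
    (A : Matrix n n R) (c : ι → ι → R) :
    trace (∑ i, ∑ j, c i j • (E i * A * E j)) = trace (A * ∑ i, c i i • E i) := by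
  simp only [trace_sum, trace_smul, Matrix.mul_sum, Matrix.mul_smul,
    trace_mul_mul_of_orthogonal_idempotents hidem horth, smul_eq_mul, mul_ite, mul_zero,
    Finset.sum_ite_eq, Finset.mem_univ, if_true]

end Matrix

theorem stmt_7_general (m : ℕ) (T : Matrix (Fin m) (Fin m) ℂ)
    (U P : Matrix (Fin m) (Fin m) ℂ)
    (hpolar : T = U * P)
    (k : ℕ) (s : Fin k → ℝ) (hs : ∀ i, 0 < s i)
    (E : Fin k → Matrix (Fin m) (Fin m) ℂ)
    (hEidem : ∀ i, E i * E i = E i)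
    (hEorth : ∀ i j, i ≠ j → E i * E j = 0)
    (hPdec : P = ∑ i, (s i : ℂ) • E i)
    (φ : ℝ → ℝ → ℂ) (hφ : ∀ s' : ℝ, 0 < s' → φ s' s' = (s' : ℂ)) :
    Matrix.trace (∑ i, ∑ j, φ (s i) (s j) • (E i * U * E j)) = Matrix.trace T := by
  have hdiag : ∑ i, φ (s i) (s i) • E i = P := by
    rw [hPdec]
    exact Finset.sum_congr rfl fun i _ => by rw [hφ (s i) (hs i)]
  rw [trace_sum_smul_mul_mul_of_orthogonal_idempotents hEidem hEorth, hdiag, hpolar]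

/-- With `T = U·P` the polar decomposition of an invertible matrix and
`P = Σᵢ sᵢ Eᵢ` a spectral decomposition, for any `φ` on the positive reals with
`φ(s,s) = s`, `trace(Σᵢⱼ φ(sᵢ,sⱼ) Eᵢ U Eⱼ) = trace(T)`. -/
theorem stmt_7 (m : ℕ) (hm : 1 ≤ m) (T : Matrix (Fin m) (Fin m) ℂ) (hT : IsUnit T.det)
    (U P : Matrix (Fin m) (Fin m) ℂ)
    (hU : U ∈ Matrix.unitaryGroup (Fin m) ℂ)
    (hP : P.PosSemidef) (hP2 : P * P = Tᴴ * T) (hpolar : T = U * P)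
    (k : ℕ) (s : Fin k → ℝ) (hs : ∀ i, 0 < s i)
    (E : Fin k → Matrix (Fin m) (Fin m) ℂ)
    (hEherm : ∀ i, (E i).IsHermitian) (hEidem : ∀ i, E i * E i = E i)
    (hEorth : ∀ i j, i ≠ j → E i * E j = 0) (hEsum : ∑ i, E i = 1)
    (hPdec : P = ∑ i, (s i : ℂ) • E i)
    (φ : ℝ → ℝ → ℂ) (hφ : ∀ s' : ℝ, 0 < s' → φ s' s' = (s' : ℂ)) :
    Matrix.trace (∑ i, ∑ j, φ (s i) (s j) • (E i * U * E j)) = Matrix.trace T :=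
  stmt_7_general m T U P hpolar k s hs E hEidem hEorth hPdec φ hφ
end

section
/- Let m ≥ 1 and let T be an invertible m×m complex matrix. Set |M| := (M*M)^{1/2} for any m×m matrix M, and let U := T·|T|⁻¹ (a unitary matrix). Define a sequence of matrices by T_0 := T and T_{n+1} := (U·|T_n| + |T_n|·U)/2 for n ≥ 0. Then the sequence (T_n) converges (entrywise, equivalently in norm) to a normal matrix N (i.e., N*N = NN*), and trace(N) = trace(T). -/
/-!
Because `U` is unitary and `|Tₙ|` is positive semidefinite, `(|Tₙ| + U*|Tₙ|U)/2` is a positive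
square root of `Tₙ₊₁*Tₙ₊₁`; hence `|Tₙ₊₁| = (|Tₙ| + U*|Tₙ|U)/2`, `Tₙ = U|Tₙ|` for every `n`, and
`trace Tₙ = trace T`. For the Frobenius inner product, `X ↦ U*XU` is an isometry `A` and the `|Tₙ|`
are the iterates of `(1 + A)/2`. By the parallelogram law this average strictly shrinks every
nonzero vector orthogonal to the fixed space of `A`, uniformly so by compactness of the unit
sphere, so the iterates converge to a fixed point `P` of `A`. The limit `UP` is the product of a
unitary and a Hermitian matrix that commute, hence normal.
-/

open Matrix Filter
open scoped ComplexOrder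

/-- The absolute value `|M| = (M*M)^{1/2}` of a square complex matrix. -/
noncomputable def matrixAbs {m : ℕ} (M : Matrix (Fin m) (Fin m) ℂ) :
    Matrix (Fin m) (Fin m) ℂ :=
  (Matrix.posSemidef_conjTranspose_mul_self M).1.eigenvectorUnitary.1 *
    diagonal ((↑) ∘ (√·) ∘ (Matrix.posSemidef_conjTranspose_mul_self M).1.eigenvalues) *
    (star (Matrix.posSemidef_conjTranspose_mul_self M).1.eigenvectorUnitary : Matrix (Fin m) (Fin m) ℂ)

open Topology
open scoped InnerProductSpace

section Averaging

variable {𝕜 E F : Type*} [RCLike 𝕜]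

lemma ContinuousLinearMap.exists_norm_le_mul_of_norm_lt [NormedAddCommGroup E] [NormedSpace 𝕜 E]
    [NormedAddCommGroup F] [NormedSpace 𝕜 F] [FiniteDimensional 𝕜 E]
    (f : E →L[𝕜] F) (S : Submodule 𝕜 E) (hf : ∀ w ∈ S, w ≠ 0 → ‖f w‖ < ‖w‖) :
    ∃ c, 0 ≤ c ∧ c < 1 ∧ ∀ w ∈ S, ‖f w‖ ≤ c * ‖w‖ := by
  set g := f.comp S.subtypeL
  refine ⟨‖g‖, norm_nonneg g, ?_, fun w hw => g.le_opNorm ⟨w, hw⟩⟩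
  rcases subsingleton_or_nontrivial S with hS | hS
  · simp [g.opNorm_subsingleton]
  obtain ⟨v, hv, hgv⟩ := ((isCompact_sphere (0 : S) 1).image (f := fun v => ‖g v‖)
    (by fun_prop)).sSup_mem
    ((Set.nonempty_coe_sort.mp (NormedSpace.sphere_nonempty_rclike 𝕜 zero_le_one)).image _)
  have hv1 : ‖(v : E)‖ = 1 := mem_sphere_zero_iff_norm.mp hv
  rw [← g.sSup_sphere_eq_norm, ← hgv]
  simpa [g, hv1] using hf v v.2 (by simp [← norm_ne_zero_iff, hv1])

variable [NormedAddCommGroup E] [InnerProductSpace 𝕜 E]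

lemma norm_half_smul_add_lt_of_norm_eq {x y : E} (h : ‖y‖ = ‖x‖) (hne : x ≠ y) :
    ‖(2 : 𝕜)⁻¹ • (x + y)‖ < ‖x‖ := by
  have hpar := parallelogram_law_with_norm 𝕜 x y
  have hsub : 0 < ‖x - y‖ := norm_pos_iff.mpr (sub_ne_zero.mpr hne)
  rw [norm_smul, norm_inv, RCLike.norm_ofNat]
  nlinarith [norm_nonneg (x + y), norm_nonneg x]

theorem LinearIsometry.exists_tendsto_iterate_half_add [FiniteDimensional 𝕜 E] (A : E →ₗᵢ[𝕜] E)
    (x : E) :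
    ∃ y, A y = y ∧ Tendsto (fun n => (fun z => (2 : 𝕜)⁻¹ • (z + A z))^[n] x) atTop (𝓝 y) := by
  set L : E →L[𝕜] E := (2 : 𝕜)⁻¹ • (1 + A.toContinuousLinearMap)
  change ∃ y, A y = y ∧ Tendsto (fun n => (⇑L)^[n] x) atTop (𝓝 y)
  set K := LinearMap.eqLocus A.toLinearMap LinearMap.id
  have hAK (z : E) (hz : z ∈ K) : A z = z := LinearMap.mem_eqLocus.mp hz
  have hLK (z : E) (hz : z ∈ K) : L z = z := by
    change (2 : 𝕜)⁻¹ • (z + A z) = z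
    rw [hAK z hz, ← two_smul 𝕜, smul_smul, inv_mul_cancel₀ two_ne_zero, one_smul]
  have hLKperp : Set.MapsTo L Kᗮ Kᗮ := by
    intro w hw
    have hAw : A w ∈ Kᗮ := fun u hu => by
      rw [← hAK u hu, A.inner_map_map]; exact hw u hu
    exact Kᗮ.smul_mem _ (Kᗮ.add_mem hw hAw)
  have hcontr (w : E) (hw : w ∈ Kᗮ) (hw0 : w ≠ 0) : ‖L w‖ < ‖w‖ := by
    refine norm_half_smul_add_lt_of_norm_eq (A.norm_map w) fun hfix => hw0 ?_
    exact (Submodule.mem_bot 𝕜).mp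
      (K.inf_orthogonal_eq_bot ▸ ⟨LinearMap.mem_eqLocus.mpr hfix.symm, hw⟩)
  obtain ⟨c, hc0, hc1, hc⟩ := L.exists_norm_le_mul_of_norm_lt Kᗮ hcontr
  obtain ⟨k, hk, w, hw, rfl⟩ := K.exists_add_mem_mem_orthogonal x
  refine ⟨k, hAK k hk, ?_⟩
  have hdecay (n : ℕ) : ‖(⇑L)^[n] w‖ ≤ c ^ n * ‖w‖ := by
    induction n with
    | zero => simp
    | succ n ih =>
      rw [Function.iterate_succ_apply', pow_succ', mul_assoc]
      exact (hc _ (hLKperp.iterate n hw)).trans (mul_le_mul_of_nonneg_left ih hc0)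
  have hw_lim : Tendsto (fun n => (⇑L)^[n] w) atTop (𝓝 0) :=
    squeeze_zero_norm hdecay
      (by simpa using (tendsto_pow_atTop_nhds_zero_of_lt_one hc0 hc1).mul_const ‖w‖)
  simpa [iterate_map_add, Function.iterate_fixed (hLK k hk)] using hw_lim.const_add k

end Averaging

section MatrixAbs

open scoped MatrixOrder

variable {m : ℕ}

lemma matrixAbs_eq_cfcSqrt (M : Matrix (Fin m) (Fin m) ℂ) :
    matrixAbs M = CFC.sqrt (Mᴴ * M) := by
  have hM := posSemidef_conjTranspose_mul_self M
  rw [CFC.sqrt_eq_cfc, cfc_nnreal_eq_real _ (Mᴴ * M), hM.1.cfc_eq]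
  simp only [IsHermitian.cfc, Unitary.conjStarAlgAut_apply, matrixAbs]
  congr 3
  funext i
  simp [Real.coe_toNNReal', max_eq_left (hM.eigenvalues_nonneg i)]

lemma matrixAbs_posSemidef (M : Matrix (Fin m) (Fin m) ℂ) : (matrixAbs M).PosSemidef := by
  rw [matrixAbs_eq_cfcSqrt]
  exact (CFC.sqrt_nonneg _).posSemidef

lemma matrixAbs_mul_self (M : Matrix (Fin m) (Fin m) ℂ) :
    matrixAbs M * matrixAbs M = Mᴴ * M := by
  rw [matrixAbs_eq_cfcSqrt]
  exact CFC.sqrt_mul_sqrt_self _ (posSemidef_conjTranspose_mul_self M).nonneg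

lemma eq_matrixAbs_of_mul_self {M Q : Matrix (Fin m) (Fin m) ℂ} (hQ : Q.PosSemidef)
    (h : Q * Q = Mᴴ * M) : Q = matrixAbs M := by
  rw [matrixAbs_eq_cfcSqrt]
  exact (CFC.sqrt_unique h hQ.nonneg).symm

end MatrixAbs

section Polar

variable {m : ℕ} {T : Matrix (Fin m) (Fin m) ℂ}

lemma isUnit_det_matrixAbs (hT : IsUnit T.det) : IsUnit (matrixAbs T).det := by
  have h : IsUnit ((matrixAbs T).det * (matrixAbs T).det) := by
    rw [← det_mul, matrixAbs_mul_self, det_mul, det_conjTranspose]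
    exact hT.star.mul hT
  exact isUnit_of_mul_isUnit_left h

lemma mul_inv_matrixAbs_mul_matrixAbs (hT : IsUnit T.det) :
    T * (matrixAbs T)⁻¹ * matrixAbs T = T := by
  rw [Matrix.mul_assoc, nonsing_inv_mul _ (isUnit_det_matrixAbs hT), Matrix.mul_one]

lemma mul_inv_matrixAbs_mem_unitaryGroup (hT : IsUnit T.det) :
    T * (matrixAbs T)⁻¹ ∈ unitaryGroup (Fin m) ℂ := by
  have hdet := isUnit_det_matrixAbs hT
  rw [mem_unitaryGroup_iff', star_eq_conjTranspose, conjTranspose_mul, conjTranspose_nonsing_inv,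
    (matrixAbs_posSemidef T).isHermitian.eq]
  calc (matrixAbs T)⁻¹ * Tᴴ * (T * (matrixAbs T)⁻¹)
      = (matrixAbs T)⁻¹ * (matrixAbs T * matrixAbs T) * (matrixAbs T)⁻¹ := by
        simp only [matrixAbs_mul_self, Matrix.mul_assoc]
    _ = 1 := by
        rw [← Matrix.mul_assoc, nonsing_inv_mul _ hdet, Matrix.one_mul, mul_nonsing_inv _ hdet]

end Polar

namespace Matrix

variable {ι 𝕜 : Type*} [Fintype ι] [RCLike 𝕜]

def toEuclideanSpace {κ : Type*} [Fintype κ] : Matrix ι κ 𝕜 ≃ₗ[𝕜] EuclideanSpace 𝕜 (ι × κ) where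
  toFun X := WithLp.toLp 2 fun p => X p.1 p.2
  invFun v := of fun i j => v (i, j)
  map_add' _ _ := rfl
  map_smul' _ _ := rfl
  left_inv _ := rfl
  right_inv _ := rfl

lemma inner_toEuclideanSpace {κ : Type*} [Fintype κ] (X Y : Matrix ι κ 𝕜) :
    ⟪toEuclideanSpace X, toEuclideanSpace Y⟫_𝕜 = trace (Xᴴ * Y) := by
  simp only [toEuclideanSpace, PiLp.inner_apply, RCLike.inner_apply, trace, diag_apply,
    mul_apply, conjTranspose_apply]
  rw [Fintype.sum_prod_type, Finset.sum_comm]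
  exact Finset.sum_congr rfl fun _ _ => Finset.sum_congr rfl fun _ _ => mul_comm _ _

variable [DecidableEq ι] {U : Matrix ι ι 𝕜}

lemma conjTranspose_mul_mul_cancel (hU : U ∈ unitaryGroup ι 𝕜) (X : Matrix ι ι 𝕜) :
    Uᴴ * (U * X) = X := by
  rw [← Matrix.mul_assoc, ← star_eq_conjTranspose, Unitary.star_mul_self_of_mem hU, Matrix.one_mul]

lemma mul_conjTranspose_mul_cancel (hU : U ∈ unitaryGroup ι 𝕜) (X : Matrix ι ι 𝕜) :
    U * (Uᴴ * X) = X := by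
  rw [← Matrix.mul_assoc, ← star_eq_conjTranspose, Unitary.mul_star_self_of_mem hU, Matrix.one_mul]

theorem exists_tendsto_of_half_add_conj (hU : U ∈ unitaryGroup ι 𝕜)
    (P : ℕ → Matrix ι ι 𝕜) (hP : ∀ n, P (n + 1) = (2 : 𝕜)⁻¹ • (P n + Uᴴ * P n * U)) :
    ∃ Q, Uᴴ * Q * U = Q ∧ Tendsto P atTop (𝓝 Q) := by
  set e : Matrix ι ι 𝕜 ≃ₗ[𝕜] EuclideanSpace 𝕜 (ι × ι) := toEuclideanSpace
  set A : EuclideanSpace 𝕜 (ι × ι) →ₗᵢ[𝕜] EuclideanSpace 𝕜 (ι × ι) :=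
    (e.conj (LinearMap.mulLeftRight 𝕜 (Uᴴ, U))).isometryOfInner fun x y => by
      obtain ⟨X, rfl⟩ := e.surjective x
      obtain ⟨Y, rfl⟩ := e.surjective y
      simp only [LinearEquiv.conj_apply, LinearMap.coe_comp, LinearEquiv.coe_coe,
        Function.comp_apply, LinearEquiv.symm_apply_apply, LinearMap.mulLeftRight_apply,
        e, inner_toEuclideanSpace, conjTranspose_mul, conjTranspose_conjTranspose,
        Matrix.mul_assoc, mul_conjTranspose_mul_cancel hU]
      have hUU : U * Uᴴ = 1 := Unitary.mul_star_self_of_mem hU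
      rw [trace_mul_comm, Matrix.mul_assoc, Matrix.mul_assoc, hUU, Matrix.mul_one]
  have hA (X : Matrix ι ι 𝕜) : A (e X) = e (Uᴴ * X * U) := by
    simp [A, LinearEquiv.conj_apply]
  obtain ⟨y, hy, hlim⟩ := A.exists_tendsto_iterate_half_add (e (P 0))
  have hiter (n : ℕ) : (fun z => (2 : 𝕜)⁻¹ • (z + A z))^[n] (e (P 0)) = e (P n) := by
    induction n with
    | zero => rfl
    | succ n ih => rw [Function.iterate_succ_apply', ih, hP, hA, map_smul, map_add]
  refine ⟨e.symm y, e.injective ?_, ?_⟩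
  · rw [← hA, e.apply_symm_apply, hy]
  · have h := (e.toContinuousLinearEquiv.symm.continuous.tendsto y).comp hlim
    simpa only [Function.comp_def, hiter, LinearEquiv.coe_toContinuousLinearEquiv_symm',
      LinearEquiv.symm_apply_apply] using h

end Matrix

lemma matrixAbs_half_smul_add {m : ℕ} {U P : Matrix (Fin m) (Fin m) ℂ}
    (hU : U ∈ unitaryGroup (Fin m) ℂ) (hP : P.PosSemidef) :
    matrixAbs ((2 : ℂ)⁻¹ • (U * P + P * U)) = (2 : ℂ)⁻¹ • (P + Uᴴ * P * U) := by
  refine (eq_matrixAbs_of_mul_self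
    ((hP.add (hP.conjTranspose_mul_mul_same U)).smul (by positivity)) ?_).symm
  rw [conjTranspose_smul, smul_mul_smul_comm, smul_mul_smul_comm, star_inv₀, star_ofNat]
  congr 1
  simp only [conjTranspose_add, conjTranspose_mul, hP.isHermitian.eq, Matrix.add_mul,
    Matrix.mul_add, Matrix.mul_assoc, conjTranspose_mul_mul_cancel hU,
    mul_conjTranspose_mul_cancel hU]

lemma isStarNormal_mul_of_commute {R : Type*} [Monoid R] [StarMul R] {u p : R}
    (hu : u ∈ unitary R) (hp : IsSelfAdjoint p) (h : Commute u p) : IsStarNormal (u * p) := by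
  refine ⟨?_⟩
  rw [star_mul, hp.star_eq]
  exact (h.symm.mul_right (Commute.refl p)).mul_left
    ((commute_unitary_star_self hu).mul_right (by simpa only [hp.star_eq] using h.star_star))

theorem stmt_8_general (m : ℕ) (T : Matrix (Fin m) (Fin m) ℂ) (hT : IsUnit T.det)
    (U : Matrix (Fin m) (Fin m) ℂ) (hU : U = T * (matrixAbs T)⁻¹)
    (Tseq : ℕ → Matrix (Fin m) (Fin m) ℂ) (h0 : Tseq 0 = T)
    (hrec : ∀ n, Tseq (n + 1) =
      (2 : ℂ)⁻¹ • (U * matrixAbs (Tseq n) + matrixAbs (Tseq n) * U)) :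
    ∃ N : Matrix (Fin m) (Fin m) ℂ,
      Tendsto Tseq atTop (nhds N) ∧ Nᴴ * N = N * Nᴴ ∧
        Matrix.trace N = Matrix.trace T := by
  have hUunit : U ∈ unitaryGroup (Fin m) ℂ := hU ▸ mul_inv_matrixAbs_mem_unitaryGroup hT
  have habs (n : ℕ) : matrixAbs (Tseq (n + 1)) =
      (2 : ℂ)⁻¹ • (matrixAbs (Tseq n) + Uᴴ * matrixAbs (Tseq n) * U) := by
    rw [hrec n]
    exact matrixAbs_half_smul_add hUunit (matrixAbs_posSemidef _)
  have hpolar (n : ℕ) : Tseq n = U * matrixAbs (Tseq n) := by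
    cases n with
    | zero => rw [h0, hU, mul_inv_matrixAbs_mul_matrixAbs hT]
    | succ n =>
      rw [habs n, hrec n, Matrix.mul_smul, Matrix.mul_add, ← Matrix.mul_assoc U,
        mul_conjTranspose_mul_cancel hUunit]
  have htrace (n : ℕ) : trace (Tseq n) = trace T := by
    induction n with
    | zero => rw [h0]
    | succ n ih =>
      rw [hrec n, trace_smul, trace_add, trace_mul_comm (matrixAbs _) U, ← hpolar n, ih,
        smul_eq_mul, ← two_mul, inv_mul_cancel_left₀ two_ne_zero]
  obtain ⟨P, hPfix, hPlim⟩ :=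
    exists_tendsto_of_half_add_conj hUunit (fun n => matrixAbs (Tseq n)) habs
  have hTlim : Tendsto Tseq atTop (𝓝 (U * P)) := by
    simpa only [← hpolar] using hPlim.const_mul U
  have hPherm : P.IsHermitian :=
    (isClosed_eq continuous_id.matrix_conjTranspose continuous_id).mem_of_tendsto hPlim
      (Eventually.of_forall fun n => (matrixAbs_posSemidef (Tseq n)).isHermitian)
  have hUP : Commute U P := (commute_unitary_iff_star_left_conjugate hUunit).mpr hPfix
  refine ⟨U * P, hTlim,
    (isStarNormal_mul_of_commute hUunit hPherm.isSelfAdjoint hUP).star_comm_self.eq, ?_⟩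
  exact tendsto_nhds_unique ((continuous_id.matrix_trace.tendsto _).comp hTlim |>.congr htrace)
    tendsto_const_nhds

/-- Let `T` be invertible, `U := T|T|⁻¹`, and define `T₀ := T`,
`T_{n+1} := (U|Tₙ| + |Tₙ|U)/2`.  Then `(Tₙ)` converges to a normal matrix `N`
with `trace N = trace T`. -/
theorem stmt_8 (m : ℕ) (hm : 1 ≤ m) (T : Matrix (Fin m) (Fin m) ℂ) (hT : IsUnit T.det)
    (U : Matrix (Fin m) (Fin m) ℂ) (hU : U = T * (matrixAbs T)⁻¹)
    (Tseq : ℕ → Matrix (Fin m) (Fin m) ℂ) (h0 : Tseq 0 = T)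
    (hrec : ∀ n, Tseq (n + 1) =
      (2 : ℂ)⁻¹ • (U * matrixAbs (Tseq n) + matrixAbs (Tseq n) * U)) :
    ∃ N : Matrix (Fin m) (Fin m) ℂ,
      Tendsto Tseq atTop (nhds N) ∧ Nᴴ * N = N * Nᴴ ∧
        Matrix.trace N = Matrix.trace T :=
  stmt_8_general m T hT U hU Tseq h0 hrec
end

section
/- Let m ≥ 1, let U be a unitary m×m complex matrix and let P be any m×m complex matrix. Define S_n := 2^{−n} Σ_{k=0}^{n} binomial(n,k) (U*)^k P U^k for n ≥ 0. Then the sequence (S_n) converges to some matrix P₀, and the limit P₀ commutes with U: U·P₀ = P₀·U. -/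
/-!
Write `T X = Uᴴ X U`, so that `Sₙ = 2⁻ⁿ (1 + T)ⁿ P`. For the operator norm `T` is an isometry of the
finite-dimensional space of matrices. An isometry has only unimodular eigenvalues and no nontrivial
Jordan blocks, so it is diagonalisable. On a `λ`-eigenvector, `Sₙ` acts as `((1 + λ) / 2)ⁿ`, which
is `1` for `λ = 1` and tends to `0` otherwise, because `|1 + λ| < 2` when `|λ| = 1` and `λ ≠ 1`.
Hence `Sₙ P` converges to the component of `P` fixed by `T`, i.e. to a matrix commuting with `U`.
-/

open Matrix Filter Finset Topology

namespace Module.End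

section Isometry

variable {𝕜 E : Type*} [RCLike 𝕜] [NormedAddCommGroup E] [NormedSpace 𝕜 E] {T : Module.End 𝕜 E}

theorem HasEigenvector.norm_eq_one_of_isometry (hT : ∀ x, ‖T x‖ = ‖x‖) {μ : 𝕜} {x : E}
    (hx : T.HasEigenvector μ x) : ‖μ‖ = 1 := by
  have h := hT x
  rwa [hx.apply_eq_smul, norm_smul, mul_eq_right₀ (norm_ne_zero_iff.2 hx.2)] at h

theorem norm_pow_apply_of_isometry (hT : ∀ x, ‖T x‖ = ‖x‖) (n : ℕ) (x : E) :
    ‖(T ^ n) x‖ = ‖x‖ := by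
  induction n with
  | zero => rfl
  | succ n ih => rw [pow_succ', mul_apply, hT, ih]

/-- If `T x = μ x + y` with `y ≠ 0` an eigenvector, then `Tⁿ⁺¹ x = μⁿ⁺¹ x + (n + 1) μⁿ y` grows
linearly in norm, which an isometry forbids. -/
theorem apply_sub_smul_eq_zero_of_isometry (hT : ∀ x, ‖T x‖ = ‖x‖) {μ : 𝕜} {x : E}
    (hx : (T - μ • 1) ((T - μ • 1) x) = 0) : (T - μ • 1) x = 0 := by
  set y := (T - μ • 1) x
  by_contra hy0
  have hTx : T x = μ • x + y := by simp [y]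
  have hTy : T y = μ • y := by simpa [sub_eq_zero] using hx
  have hμ : ‖μ‖ = 1 := HasEigenvector.norm_eq_one_of_isometry hT ⟨mem_eigenspace_iff.2 hTy, hy0⟩
  have hpow (n : ℕ) : (T ^ (n + 1)) x = μ ^ (n + 1) • x + ((n + 1 : 𝕜) * μ ^ n) • y := by
    induction n with
    | zero => simpa using hTx
    | succ n ih =>
      rw [pow_succ', mul_apply, ih, map_add, map_smul, map_smul, hTx, hTy]
      push_cast
      module
  have hbound (n : ℕ) : (n + 1 : ℝ) * ‖y‖ ≤ 2 * ‖x‖ :=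
    calc (n + 1 : ℝ) * ‖y‖ = ‖((n + 1 : 𝕜) * μ ^ n) • y‖ := by
          rw [norm_smul, norm_mul, norm_pow, hμ, one_pow, mul_one]
          norm_cast
      _ = ‖(T ^ (n + 1)) x - μ ^ (n + 1) • x‖ := by rw [hpow, add_sub_cancel_left]
      _ ≤ ‖(T ^ (n + 1)) x‖ + ‖μ ^ (n + 1) • x‖ := norm_sub_le _ _
      _ = 2 * ‖x‖ := by
          rw [norm_pow_apply_of_isometry hT, norm_smul, norm_pow, hμ, one_pow, one_mul, two_mul]
  obtain ⟨n, hn⟩ := exists_nat_gt (2 * ‖x‖ / ‖y‖)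
  rw [div_lt_iff₀ (norm_pos_iff.2 hy0)] at hn
  nlinarith [hbound n, norm_nonneg y]

theorem maxGenEigenspace_eq_eigenspace_of_isometry (hT : ∀ x, ‖T x‖ = ‖x‖) (μ : 𝕜) :
    T.maxGenEigenspace μ = T.eigenspace μ := by
  refine le_antisymm (fun x hx => ?_) eigenspace_le_maxGenEigenspace
  suffices ∀ (k : ℕ) (x : E), ((T - μ • 1) ^ k) x = 0 → (T - μ • 1) x = 0 by
    obtain ⟨k, hk⟩ := (mem_maxGenEigenspace T μ x).1 hx
    simpa [sub_eq_zero] using this k x hk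
  intro k
  induction k with
  | zero => simp
  | succ k ih =>
    intro x hx
    rw [pow_succ, mul_apply] at hx
    exact apply_sub_smul_eq_zero_of_isometry hT (ih _ hx)

end Isometry

end Module.End

theorem Complex.norm_one_add_div_two_lt_one {z : ℂ} (hz : ‖z‖ = 1) (h1 : z ≠ 1) :
    ‖(1 + z) / 2‖ < 1 := by
  have hle : ‖1 + z‖ ≤ 2 := (norm_add_le 1 z).trans (by rw [norm_one, hz]; norm_num)
  have hne : ‖1 + z‖ ≠ 2 := fun h => h1 <|
    (eq_of_norm_eq_of_norm_add_eq (by rw [norm_one, hz]) (by rw [h, norm_one, hz]; norm_num)).symm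
  rw [norm_div, Complex.norm_two, div_lt_one two_pos]
  exact lt_of_le_of_ne hle hne

namespace Module.End

variable {E : Type*} [NormedAddCommGroup E] [NormedSpace ℂ E]

noncomputable def binomialMean (T : Module.End ℂ E) (n : ℕ) : Module.End ℂ E :=
  ((2 : ℂ) ^ n)⁻¹ • ∑ k ∈ range (n + 1), (n.choose k : ℂ) • T ^ k

theorem binomialMean_apply_of_mem_eigenspace {T : Module.End ℂ E} {μ : ℂ} {x : E}
    (hx : x ∈ T.eigenspace μ) (n : ℕ) : binomialMean T n x = ((1 + μ) / 2) ^ n • x := by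
  have hpow (k : ℕ) : (T ^ k) x = μ ^ k • x := by
    induction k with
    | zero => simp
    | succ k ih =>
      rw [pow_succ', mul_apply, ih, map_smul, mem_eigenspace_iff.1 hx, smul_smul, pow_succ]
  simp only [binomialMean, LinearMap.smul_apply, LinearMap.sum_apply, hpow, smul_smul,
    ← Finset.sum_smul]
  rw [div_pow, add_comm 1 μ, add_pow, div_eq_inv_mul, Finset.mul_sum, Finset.mul_sum]
  congr 2 with k
  ring

theorem exists_tendsto_binomialMean_of_isometry [FiniteDimensional ℂ E] {T : Module.End ℂ E}
    (hT : ∀ x, ‖T x‖ = ‖x‖) (x : E) :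
    ∃ L, T L = L ∧ Tendsto (fun n => binomialMean T n x) atTop (𝓝 L) := by
  have hdiag : ⨆ μ, T.eigenspace μ = ⊤ := by
    simpa only [maxGenEigenspace_eq_eigenspace_of_isometry hT] using T.iSup_maxGenEigenspace_eq_top
  refine Submodule.iSup_induction _ (motive := fun x => ∃ L, T L = L ∧
    Tendsto (fun n => binomialMean T n x) atTop (𝓝 L)) (hdiag ▸ Submodule.mem_top) ?_ ?_ ?_
  · intro μ x hx
    simp only [binomialMean_apply_of_mem_eigenspace hx]
    obtain rfl | hμ := eq_or_ne μ 1
    · refine ⟨x, by simpa using mem_eigenspace_iff.1 hx, ?_⟩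
      norm_num
    obtain rfl | hx0 := eq_or_ne x 0
    · exact ⟨0, map_zero T, by simp⟩
    have hlt := Complex.norm_one_add_div_two_lt_one
      (HasEigenvector.norm_eq_one_of_isometry hT ⟨hx, hx0⟩) hμ
    exact ⟨0, map_zero T,
      by simpa using (tendsto_pow_atTop_nhds_zero_of_norm_lt_one hlt).smul_const x⟩
  · exact ⟨0, map_zero T, by simp⟩
  · rintro x y ⟨L, hL, hx⟩ ⟨M, hM, hy⟩
    exact ⟨L + M, by rw [map_add, hL, hM], by simpa using hx.add hy⟩

end Module.End

theorem LinearMap.mulLeft_mul_mulRight_pow {R A : Type*} [CommSemiring R] [Semiring A]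
    [Algebra R A] (a b : A) (k : ℕ) :
    (mulLeft R a * mulRight R b) ^ k = mulLeft R (a ^ k) * mulRight R (b ^ k) := by
  rw [(commute_mulLeft_right a b).mul_pow, pow_mulLeft, pow_mulRight]

section L2Operator

open scoped Matrix.Norms.L2Operator

/- For the operator norm, conjugation by a unitary is an isometry (`CStarRing`); this norm induces
the usual topology on matrices, so the limit below is the one of the main theorem. -/
theorem Matrix.exists_tendsto_binomialMean_conj {n : Type*} [Fintype n] [DecidableEq n]
    {U : Matrix n n ℂ} (hU : U ∈ unitaryGroup n ℂ) (P : Matrix n n ℂ) :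
    ∃ L, Uᴴ * L * U = L ∧
      Tendsto
        (fun k => Module.End.binomialMean (LinearMap.mulLeft ℂ Uᴴ * LinearMap.mulRight ℂ U) k P)
        atTop (𝓝 L) := by
  have hT (X : Matrix n n ℂ) : ‖(LinearMap.mulLeft ℂ Uᴴ * LinearMap.mulRight ℂ U) X‖ = ‖X‖ := by
    rw [Module.End.mul_apply, LinearMap.mulLeft_apply, LinearMap.mulRight_apply,
      ← Matrix.mul_assoc, CStarRing.norm_mul_mem_unitary _ hU,
      ← star_eq_conjTranspose, CStarRing.norm_mem_unitary_mul _ (Unitary.star_mem hU)]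
  obtain ⟨L, hL, hlim⟩ := Module.End.exists_tendsto_binomialMean_of_isometry hT P
  exact ⟨L, by simpa [Matrix.mul_assoc] using hL, hlim⟩

end L2Operator

theorem stmt_9_general (m : ℕ) (U : Matrix (Fin m) (Fin m) ℂ)
    (hU : U ∈ Matrix.unitaryGroup (Fin m) ℂ)
    (P : Matrix (Fin m) (Fin m) ℂ) :
    ∃ P₀ : Matrix (Fin m) (Fin m) ℂ,
      Tendsto
        (fun n : ℕ =>
          ((2 : ℂ) ^ n)⁻¹ •
            ∑ k ∈ Finset.range (n + 1), (n.choose k : ℂ) • ((Uᴴ) ^ k * P * U ^ k))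
        atTop (nhds P₀) ∧
      U * P₀ = P₀ * U := by
  obtain ⟨L, hL, hlim⟩ := Matrix.exists_tendsto_binomialMean_conj hU P
  refine ⟨L, ?_, ?_⟩
  · simpa only [Module.End.binomialMean, LinearMap.smul_apply, LinearMap.sum_apply,
      LinearMap.mulLeft_mul_mulRight_pow, Module.End.mul_apply, LinearMap.mulLeft_apply,
      LinearMap.mulRight_apply, Matrix.mul_assoc] using hlim
  · calc U * L = U * (Uᴴ * L * U) := by rw [hL]
      _ = L * U := by
        rw [← Matrix.mul_assoc, ← Matrix.mul_assoc, ← star_eq_conjTranspose,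
          Unitary.mul_star_self_of_mem hU, Matrix.one_mul]

/-- For a unitary `U` and any matrix `P`, the sequence
`Sₙ := 2⁻ⁿ Σ_{k=0}^{n} C(n,k) (U*)ᵏ P Uᵏ` converges to a matrix `P₀` commuting
with `U`. -/
theorem stmt_9 (m : ℕ) (hm : 1 ≤ m) (U : Matrix (Fin m) (Fin m) ℂ)
    (hU : U ∈ Matrix.unitaryGroup (Fin m) ℂ)
    (P : Matrix (Fin m) (Fin m) ℂ) :
    ∃ P₀ : Matrix (Fin m) (Fin m) ℂ,
      Tendsto
        (fun n : ℕ =>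
          ((2 : ℂ) ^ n)⁻¹ •
            ∑ k ∈ Finset.range (n + 1), (n.choose k : ℂ) • ((Uᴴ) ^ k * P * U ^ k))
        atTop (nhds P₀) ∧
      U * P₀ = P₀ * U :=
  stmt_9_general m U hU P
end

section
/- Let λ ∈ (0,1), let b > 0, let p ≥ 0 be a natural number, and let (α_j)_{j≥0} be a sequence of strictly positive real numbers such that α_j = b for all j > p. Then the sequence y_n := ( Σ_{j=0}^{n} binomial(n,j) λ^{n−j} (1−λ)^{j} α_j^{−1} )^{−1} converges to b as n → ∞. -/
/-!
Since `(λ + (1 - λ)) ^ n = 1`, the binomial weights `C(n,j) λ^(n-j) (1-λ)^j` sum to one, so the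
sum defining `yₙ⁻¹` equals `b⁻¹` plus a weighted sum of the differences `α_j⁻¹ - b⁻¹`. These vanish
for `j > p`, and each of the finitely many remaining weights tends to zero, because
`C(n,j) λ^(n-j)` is the general term of the convergent series `∑ₙ C(n+j,j) λⁿ = (1-λ)^-(j+1)`.
-/

open Filter Topology Finset

theorem tendsto_choose_mul_pow_sub_nhds_zero {R : Type*} [NormedRing R] [HasSummableGeomSeries R]
    (k : ℕ) {r : R} (hr : ‖r‖ < 1) :
    Tendsto (fun n : ℕ ↦ (n.choose k : R) * r ^ (n - k)) atTop (𝓝 0) := by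
  refine (tendsto_add_atTop_iff_nat k).1 ?_
  simpa only [Nat.add_sub_cancel] using
    (summable_choose_mul_geometric_of_norm_lt_one k hr).tendsto_atTop_zero

theorem tendsto_sum_choose_mul_pow_mul_of_eq_zero {r : ℝ} (hr : |r| < 1) (s : ℝ) {c : ℕ → ℝ}
    {p : ℕ} (hc : ∀ j, p < j → c j = 0) :
    Tendsto (fun n : ℕ ↦ ∑ j ∈ range (n + 1), (n.choose j : ℝ) * r ^ (n - j) * s ^ j * c j)
      atTop (𝓝 0) := by
  have hfinite : ∀ᶠ n in atTop,
      ∑ j ∈ range (p + 1), (n.choose j : ℝ) * r ^ (n - j) * s ^ j * c j =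
        ∑ j ∈ range (n + 1), (n.choose j : ℝ) * r ^ (n - j) * s ^ j * c j := by
    filter_upwards [eventually_ge_atTop p] with n hn
    refine sum_subset (range_subset_range.2 (by omega)) fun j _ hj ↦ ?_
    rw [hc j (by simpa using hj), mul_zero]
  refine Tendsto.congr' hfinite ?_
  simpa using tendsto_finsetSum (range (p + 1)) fun j _ ↦
    ((tendsto_choose_mul_pow_sub_nhds_zero j (r := r) hr).mul_const (s ^ j)).mul_const (c j)

theorem sum_choose_mul_pow_mul_pow_one_sub (lam : ℝ) (n : ℕ) :
    ∑ j ∈ range (n + 1), (n.choose j : ℝ) * lam ^ (n - j) * (1 - lam) ^ j = 1 := by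
  have := add_pow (1 - lam) lam n
  rw [sub_add_cancel, one_pow] at this
  exact (sum_congr rfl fun j _ ↦ by ring).trans this.symm

theorem stmt_13_general (lam : ℝ) (hlam : lam ∈ Set.Ioo (0 : ℝ) 1)
    (b : ℝ) (hb : 0 < b) (p : ℕ)
    (α : ℕ → ℝ) (hαb : ∀ j, p < j → α j = b) :
    Tendsto
      (fun n : ℕ =>
        (∑ j ∈ Finset.range (n + 1),
          (n.choose j : ℝ) * lam ^ (n - j) * (1 - lam) ^ j * (α j)⁻¹)⁻¹)
      atTop (nhds b) := by
  have hlam_abs : |lam| < 1 := abs_lt.2 ⟨by linarith [hlam.1], hlam.2⟩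
  have hdiff : Tendsto (fun n : ℕ ↦ ∑ j ∈ range (n + 1),
      (n.choose j : ℝ) * lam ^ (n - j) * (1 - lam) ^ j * ((α j)⁻¹ - b⁻¹)) atTop (𝓝 0) :=
    tendsto_sum_choose_mul_pow_mul_of_eq_zero hlam_abs (1 - lam) fun j hj ↦ by
      rw [hαb j hj, sub_self]
  have hsplit : ∀ n : ℕ, ∑ j ∈ range (n + 1),
      (n.choose j : ℝ) * lam ^ (n - j) * (1 - lam) ^ j * (α j)⁻¹ =
        b⁻¹ + ∑ j ∈ range (n + 1),
          (n.choose j : ℝ) * lam ^ (n - j) * (1 - lam) ^ j * ((α j)⁻¹ - b⁻¹) := by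
    intro n
    simp only [mul_sub, sum_sub_distrib, ← sum_mul, sum_choose_mul_pow_mul_pow_one_sub, one_mul]
    ring
  simp only [hsplit]
  simpa using ((tendsto_const_nhds (x := b⁻¹)).add hdiff).inv₀ (by simp [hb.ne'])

/-- For `λ ∈ (0,1)`, `b > 0`, and a positive sequence `(α_j)` with
`α_j = b` for all `j > p`, the sequence
`yₙ := (Σ_{j=0}^{n} C(n,j) λ^{n−j} (1−λ)^j α_j⁻¹)⁻¹` converges to `b`. -/
theorem stmt_13 (lam : ℝ) (hlam : lam ∈ Set.Ioo (0 : ℝ) 1)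
    (b : ℝ) (hb : 0 < b) (p : ℕ)
    (α : ℕ → ℝ) (hα : ∀ j, 0 < α j) (hαb : ∀ j, p < j → α j = b) :
    Tendsto
      (fun n : ℕ =>
        (∑ j ∈ Finset.range (n + 1),
          (n.choose j : ℝ) * lam ^ (n - j) * (1 - lam) ^ j * (α j)⁻¹)⁻¹)
      atTop (nhds b) :=
  stmt_13_general lam hlam b hb p α hαb
end

section
/- Let λ ∈ (0,1) and let a, b be distinct strictly positive real numbers. Then there exists a sequence (α_j)_{j≥0} with α_j ∈ {a, b} for all j such that, setting x_n := Σ_{j=0}^{n} binomial(n,j) λ^{n−j} (1−λ)^{j} α_j and y_n := ( Σ_{j=0}^{n} binomial(n,j) λ^{n−j} (1−λ)^{j} α_j^{−1} )^{−1}, there exist strictly increasing sequences of indices (n_k) and (n'_k) such that x_{n_k} → a, y_{n_k} → a, x_{n'_k} → b and y_{n'_k} → b as k → ∞. -/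
/-!
The weights `C(n,j) λ^(n-j) (1-λ)^j` form the binomial distribution `Bin(n, 1-λ)`, whose mass
concentrates, by Chebyshev's inequality, in the window `|j - n(1-λ)| < n(1-λ)/2`. Take `α` constant
on the blocks `[8^m, 8^(m+1))`, equal to `a` on even and to `b` on odd blocks. For suitable times
`n_m → ∞` the window lies inside block `m`, so both the arithmetic and the harmonic means at time
`n_m` tend to the value of `α` on that block; even and odd `m` give the two subsequences.
-/

open Filter Finset Topology

/-- The probability that a `Bin(n, 1 - λ)` random variable equals `j`. -/
noncomputable def binomialWeight (lam : ℝ) (n j : ℕ) : ℝ :=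
  (n.choose j : ℝ) * lam ^ (n - j) * (1 - lam) ^ j

namespace binomialWeight

variable {lam : ℝ}

lemma eq_eval_bernsteinPolynomial (lam : ℝ) (n j : ℕ) :
    binomialWeight lam n j = (bernsteinPolynomial ℝ n j).eval (1 - lam) := by
  simp only [binomialWeight, bernsteinPolynomial, Polynomial.eval_mul, Polynomial.eval_natCast,
    Polynomial.eval_pow, Polynomial.eval_X, Polynomial.eval_sub, Polynomial.eval_one, sub_sub_cancel]
  ring

lemma nonneg (h0 : 0 ≤ lam) (h1 : lam ≤ 1) (n j : ℕ) : 0 ≤ binomialWeight lam n j := by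
  have : 0 ≤ 1 - lam := by linarith
  unfold binomialWeight
  positivity

lemma sum_eq_one (lam : ℝ) (n : ℕ) : ∑ j ∈ range (n + 1), binomialWeight lam n j = 1 := by
  simpa [eq_eval_bernsteinPolynomial, Polynomial.eval_finsetSum] using
    congrArg (Polynomial.eval (1 - lam)) (bernsteinPolynomial.sum ℝ n)

lemma sum_sq_mul_eq (lam : ℝ) (n : ℕ) :
    ∑ j ∈ range (n + 1), ((n : ℝ) * (1 - lam) - j) ^ 2 * binomialWeight lam n j =
      n * (1 - lam) * lam := by
  simpa [eq_eval_bernsteinPolynomial, Polynomial.eval_finsetSum, nsmul_eq_mul] using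
    congrArg (Polynomial.eval (1 - lam)) (bernsteinPolynomial.variance ℝ n)

/-- Chebyshev's inequality for the binomial distribution. -/
lemma sum_le_of_le_abs (h0 : 0 ≤ lam) (h1 : lam ≤ 1) {n : ℕ} {r : ℝ} (hr : 0 < r)
    {T : Finset ℕ} (hT : T ⊆ range (n + 1)) (hfar : ∀ j ∈ T, r ≤ |(n : ℝ) * (1 - lam) - j|) :
    ∑ j ∈ T, binomialWeight lam n j ≤ n * (1 - lam) * lam / r ^ 2 := by
  rw [← sum_sq_mul_eq, le_div_iff₀ (by positivity), sum_mul]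
  calc ∑ j ∈ T, binomialWeight lam n j * r ^ 2
      ≤ ∑ j ∈ T, ((n : ℝ) * (1 - lam) - j) ^ 2 * binomialWeight lam n j := by
        refine sum_le_sum fun j hj => ?_
        rw [mul_comm]
        refine mul_le_mul_of_nonneg_right ?_ (nonneg h0 h1 n j)
        simpa only [sq_abs] using pow_le_pow_left₀ hr.le (hfar j hj) 2
    _ ≤ ∑ j ∈ range (n + 1), ((n : ℝ) * (1 - lam) - j) ^ 2 * binomialWeight lam n j :=
        sum_le_sum_of_subset_of_nonneg hT fun j _ _ => mul_nonneg (sq_nonneg _) (nonneg h0 h1 n j)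

lemma abs_sum_mul_sub_le (h0 : 0 ≤ lam) (h1 : lam ≤ 1) {n : ℕ} {r : ℝ} (hr : 0 < r)
    {β : ℕ → ℝ} {v D : ℝ} (hD : ∀ j, |β j - v| ≤ D)
    (hwin : ∀ j : ℕ, |(n : ℝ) * (1 - lam) - j| < r → β j = v) :
    |∑ j ∈ range (n + 1), binomialWeight lam n j * β j - v| ≤
      D * (n * (1 - lam) * lam / r ^ 2) := by
  set T := (range (n + 1)).filter fun j => β j ≠ v
  have hfar : ∀ j ∈ T, r ≤ |(n : ℝ) * (1 - lam) - j| := fun j hj =>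
    not_lt.mp fun hlt => (mem_filter.mp hj).2 (hwin j hlt)
  calc |∑ j ∈ range (n + 1), binomialWeight lam n j * β j - v|
      = |∑ j ∈ range (n + 1), binomialWeight lam n j * (β j - v)| := by
        simp only [mul_sub, sum_sub_distrib, ← sum_mul, sum_eq_one, one_mul]
    _ = |∑ j ∈ T, binomialWeight lam n j * (β j - v)| :=
        congrArg _ (sum_filter_of_ne fun j _ h hv => h (by rw [hv, sub_self, mul_zero]) :
          ∑ j ∈ T, _ = _).symm
    _ ≤ ∑ j ∈ T, binomialWeight lam n j * D := by
        refine (abs_sum_le_sum_abs _ _).trans (sum_le_sum fun j _ => ?_)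
        rw [abs_mul, abs_of_nonneg (nonneg h0 h1 n j)]
        exact mul_le_mul_of_nonneg_left (hD j) (nonneg h0 h1 n j)
    _ ≤ D * (n * (1 - lam) * lam / r ^ 2) := by
        rw [← sum_mul, mul_comm]
        exact mul_le_mul_of_nonneg_left (sum_le_of_le_abs h0 h1 hr (filter_subset _ _) hfar)
          ((abs_nonneg _).trans (hD 0))

theorem tendsto_sum_mul (hlam : lam ∈ Set.Ioo (0 : ℝ) 1) {β : ℕ → ℝ} {v D : ℝ}
    (hD : ∀ j, |β j - v| ≤ D) {n : ℕ → ℕ} (hn : Tendsto n atTop atTop)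
    (hwin : ∀ k (j : ℕ), |(n k : ℝ) * (1 - lam) - j| < n k * (1 - lam) / 2 → β j = v) :
    Tendsto (fun k => ∑ j ∈ range (n k + 1), binomialWeight lam (n k) j * β j) atTop (𝓝 v) := by
  obtain ⟨h0, h1⟩ := hlam
  have hp : 0 < 1 - lam := by linarith
  have hbound : ∀ k, 0 < n k →
      |∑ j ∈ range (n k + 1), binomialWeight lam (n k) j * β j - v| ≤
        4 * D * lam / (1 - lam) * (n k : ℝ)⁻¹ := fun k hk => by
    have hnk : (0 : ℝ) < n k := Nat.cast_pos.mpr hk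
    refine (abs_sum_mul_sub_le h0.le h1.le (by positivity) hD (hwin k)).trans_eq ?_
    field_simp
    ring
  have hlim : Tendsto (fun k => 4 * D * lam / (1 - lam) * (n k : ℝ)⁻¹) atTop (𝓝 0) := by
    simpa using (tendsto_inv_atTop_zero.comp (tendsto_natCast_atTop_atTop.comp hn)).const_mul
      (4 * D * lam / (1 - lam))
  rw [tendsto_iff_norm_sub_tendsto_zero]
  refine squeeze_zero' (Eventually.of_forall fun k => norm_nonneg _) ?_ hlim
  filter_upwards [hn.eventually_gt_atTop 0] with k hk using hbound k hk

end binomialWeight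

/-- A time `n` at which the mean `n p` of `Bin(n, p)` lies in `[2·8^m, 2·8^m + 1)`, so that the
window `|j - n p| < n p / 2` lies inside the block `[8^m, 8^(m+1))`. -/
noncomputable def blockTime (p : ℝ) (m : ℕ) : ℕ := ⌈2 * 8 ^ m / p⌉₊

section blockTime

variable {p : ℝ}

lemma le_blockTime_mul (hp : 0 < p) (m : ℕ) : 2 * 8 ^ m ≤ blockTime p m * p :=
  (div_le_iff₀ hp).mp (Nat.le_ceil _)

lemma blockTime_mul_lt (hp : 0 < p) (hp1 : p ≤ 1) (m : ℕ) : blockTime p m * p < 2 * 8 ^ m + 1 := by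
  have h := Nat.ceil_lt_add_one (R := ℝ) (div_nonneg (by positivity) hp.le : 0 ≤ 2 * 8 ^ m / p)
  calc blockTime p m * p < (2 * 8 ^ m / p + 1) * p := mul_lt_mul_of_pos_right h hp
    _ = 2 * 8 ^ m + p := by field_simp
    _ ≤ 2 * 8 ^ m + 1 := by linarith

lemma blockTime_strictMono (hp : 0 < p) (hp1 : p ≤ 1) : StrictMono (blockTime p) := by
  refine strictMono_nat_of_lt_succ fun m => ?_
  have hlt : (blockTime p m : ℝ) * p < blockTime p (m + 1) * p := by
    have h8 : (1 : ℝ) ≤ 8 ^ m := one_le_pow₀ (by norm_num)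
    linarith [blockTime_mul_lt hp hp1 m, le_blockTime_mul hp (m + 1), pow_succ (8 : ℝ) m]
  exact_mod_cast lt_of_mul_lt_mul_right hlt hp.le

lemma log_eq_of_abs_sub_lt (hp : 0 < p) (hp1 : p ≤ 1) {m j : ℕ}
    (hj : |(blockTime p m : ℝ) * p - j| < blockTime p m * p / 2) : Nat.log 8 j = m := by
  have hlow := le_blockTime_mul hp m
  have hupp := blockTime_mul_lt hp hp1 m
  have h8 : (1 : ℝ) ≤ 8 ^ m := one_le_pow₀ (by norm_num)
  obtain ⟨hj₁, hj₂⟩ := abs_lt.mp hj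
  refine Nat.log_eq_of_pow_le_of_lt_pow ?_ ?_
  · have : ((8 ^ m : ℕ) : ℝ) < j := by push_cast; linarith
    exact_mod_cast this.le
  · have : (j : ℝ) < ((8 ^ (m + 1) : ℕ) : ℝ) := by push_cast; linarith [pow_succ (8 : ℝ) m]
    exact_mod_cast this

end blockTime

def blockSeq (a b : ℝ) (j : ℕ) : ℝ := if Even (Nat.log 8 j) then a else b

theorem tendsto_sum_binomialWeight_blockSeq {lam : ℝ} (hlam : lam ∈ Set.Ioo (0 : ℝ) 1)
    (f : ℝ → ℝ) (a b : ℝ) {e : ℕ → ℕ} (he : StrictMono e) {c : ℝ}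
    (hc : ∀ k, (if Even (e k) then a else b) = c) :
    Tendsto (fun k => ∑ j ∈ range (blockTime (1 - lam) (e k) + 1),
        binomialWeight lam (blockTime (1 - lam) (e k)) j * f (blockSeq a b j))
      atTop (𝓝 (f c)) := by
  have hp : 0 < 1 - lam := by linarith [hlam.2]
  have hp1 : 1 - lam ≤ 1 := by linarith [hlam.1]
  refine binomialWeight.tendsto_sum_mul hlam (D := |f a - f b|) (fun j => ?_)
    ((blockTime_strictMono hp hp1).comp he).tendsto_atTop fun k j hj => ?_
  · rcases hc 0 with rfl
    unfold blockSeq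
    split_ifs <;> simp [abs_sub_comm]
  · rw [blockSeq, log_eq_of_abs_sub_lt hp hp1 hj, hc]

theorem stmt_14_general (lam : ℝ) (hlam : lam ∈ Set.Ioo (0 : ℝ) 1)
    (a b : ℝ) (ha : 0 < a) (hb : 0 < b) :
    ∃ α : ℕ → ℝ, (∀ j, α j = a ∨ α j = b) ∧
      ∃ nk nk' : ℕ → ℕ, StrictMono nk ∧ StrictMono nk' ∧
        Tendsto
          (fun k : ℕ =>
            ∑ j ∈ Finset.range (nk k + 1),
              ((nk k).choose j : ℝ) * lam ^ (nk k - j) * (1 - lam) ^ j * α j)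
          atTop (nhds a) ∧
        Tendsto
          (fun k : ℕ =>
            (∑ j ∈ Finset.range (nk k + 1),
              ((nk k).choose j : ℝ) * lam ^ (nk k - j) * (1 - lam) ^ j * (α j)⁻¹)⁻¹)
          atTop (nhds a) ∧
        Tendsto
          (fun k : ℕ =>
            ∑ j ∈ Finset.range (nk' k + 1),
              ((nk' k).choose j : ℝ) * lam ^ (nk' k - j) * (1 - lam) ^ j * α j)
          atTop (nhds b) ∧
        Tendsto
          (fun k : ℕ =>
            (∑ j ∈ Finset.range (nk' k + 1),
              ((nk' k).choose j : ℝ) * lam ^ (nk' k - j) * (1 - lam) ^ j * (α j)⁻¹)⁻¹)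
          atTop (nhds b) := by
  have hmono := blockTime_strictMono (p := 1 - lam) (by linarith [hlam.2]) (by linarith [hlam.1])
  have heven : StrictMono fun k : ℕ => 2 * k := strictMono_mul_left_of_pos two_pos
  have hodd : StrictMono fun k : ℕ => 2 * k + 1 := heven.add_const 1
  have hc_even (k : ℕ) : (if Even (2 * k) then a else b) = a := if_pos (even_two_mul k)
  have hc_odd (k : ℕ) : (if Even (2 * k + 1) then a else b) = b :=
    if_neg (Nat.not_even_iff_odd.mpr (odd_two_mul_add_one k))
  refine ⟨blockSeq a b, fun j => by unfold blockSeq; split_ifs <;> simp,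
    fun k => blockTime (1 - lam) (2 * k), fun k => blockTime (1 - lam) (2 * k + 1),
    hmono.comp heven, hmono.comp hodd,
    tendsto_sum_binomialWeight_blockSeq hlam id a b heven hc_even, ?_,
    tendsto_sum_binomialWeight_blockSeq hlam id a b hodd hc_odd, ?_⟩
  · have h := (tendsto_sum_binomialWeight_blockSeq hlam Inv.inv a b heven hc_even).inv₀
      (inv_ne_zero ha.ne')
    rwa [inv_inv] at h
  · have h := (tendsto_sum_binomialWeight_blockSeq hlam Inv.inv a b hodd hc_odd).inv₀
      (inv_ne_zero hb.ne')
    rwa [inv_inv] at h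

/-- For `λ ∈ (0,1)` and distinct positive reals `a, b`, there is a
sequence `(α_j)` with values in `{a,b}` such that the arithmetic-mean iterates
`xₙ = Σ_{j≤n} C(n,j)λ^{n−j}(1−λ)^j α_j` and the harmonic-mean iterates
`yₙ = (Σ_{j≤n} C(n,j)λ^{n−j}(1−λ)^j α_j⁻¹)⁻¹` have common subsequences converging
to `a`, and common subsequences converging to `b`. -/
theorem stmt_14 (lam : ℝ) (hlam : lam ∈ Set.Ioo (0 : ℝ) 1)
    (a b : ℝ) (ha : 0 < a) (hb : 0 < b) (hab : a ≠ b) :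
    ∃ α : ℕ → ℝ, (∀ j, α j = a ∨ α j = b) ∧
      ∃ nk nk' : ℕ → ℕ, StrictMono nk ∧ StrictMono nk' ∧
        Tendsto
          (fun k : ℕ =>
            ∑ j ∈ Finset.range (nk k + 1),
              ((nk k).choose j : ℝ) * lam ^ (nk k - j) * (1 - lam) ^ j * α j)
          atTop (nhds a) ∧
        Tendsto
          (fun k : ℕ =>
            (∑ j ∈ Finset.range (nk k + 1),
              ((nk k).choose j : ℝ) * lam ^ (nk k - j) * (1 - lam) ^ j * (α j)⁻¹)⁻¹)
          atTop (nhds a) ∧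
        Tendsto
          (fun k : ℕ =>
            ∑ j ∈ Finset.range (nk' k + 1),
              ((nk' k).choose j : ℝ) * lam ^ (nk' k - j) * (1 - lam) ^ j * α j)
          atTop (nhds b) ∧
        Tendsto
          (fun k : ℕ =>
            (∑ j ∈ Finset.range (nk' k + 1),
              ((nk' k).choose j : ℝ) * lam ^ (nk' k - j) * (1 - lam) ^ j * (α j)⁻¹)⁻¹)
          atTop (nhds b) :=
  stmt_14_general lam hlam a b ha hb
end

section
/- Let λ ∈ (0,1) and let g : ℝ_{>0} × ℝ_{>0} → ℝ_{>0} be any function satisfying ((1−λ)s⁻¹ + λt⁻¹)⁻¹ ≤ g(s,t) ≤ (1−λ)s + λt for all s,t > 0. Then there exists a bounded sequence (α_j)_{j≥0} of strictly positive real numbers such that, defining γ_k^{(0)} := α_k and γ_k^{(n)} := g(γ_{k+1}^{(n−1)}, γ_k^{(n−1)}) for n ≥ 1, the sequence (γ_0^{(n)})_{n≥0} does not converge. -/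
/-!
Since `g s t ≤ (1 - λ) s + λ t` and `(g s t)⁻¹ ≤ (1 - λ) s⁻¹ + λ t⁻¹`, an induction on `n` bounds
`γ⁽ⁿ⁾` by `Aⁿ α` and `1 / γ⁽ⁿ⁾` by `Aⁿ (1 / α)`, where `A` is the positive linear operator
`(A a)_k = (1 - λ) a_{k+1} + λ a_k`. At `k = 0` these are the expectations of `α_ν` and `1 / α_ν`
under the binomial distribution `B(n, 1 - λ)`. Take `α` equal to `1` and `2` on alternate blocks of
geometrically growing length. By Chebyshev's inequality, `B(2·4ᵐ, 1 - λ)` puts all but a `1/100`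
of its mass inside the `m`-th block. Hence `γ₀⁽ⁿ⁾ ≤ 51/50` for `n = 2·4ᵐ`, `m` even, and
`γ₀⁽ⁿ⁾ ≥ 100/51` for `m` odd.
-/

open Filter Finset Polynomial

namespace IteratedMean

noncomputable def shiftMean (p : ℝ) : Module.End ℝ (ℕ → ℝ) :=
  p • LinearMap.funLeft ℝ ℝ Nat.succ + (1 - p) • 1

lemma shiftMean_apply (p : ℝ) (a : ℕ → ℝ) (k : ℕ) :
    shiftMean p a k = p * a (k + 1) + (1 - p) * a k := rfl

lemma funLeft_succ_pow_apply (j : ℕ) (a : ℕ → ℝ) (k : ℕ) :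
    (LinearMap.funLeft ℝ ℝ Nat.succ ^ j) a k = a (k + j) := by
  induction j generalizing k with
  | zero => rfl
  | succ j ih =>
    rw [pow_succ', Module.End.mul_apply, LinearMap.funLeft_apply, ih, Nat.succ_add]; rfl

lemma shiftMean_monotone {p : ℝ} (hp₀ : 0 ≤ p) (hp₁ : p ≤ 1) : Monotone (shiftMean p) :=
  fun a b hab k => by
    have := sub_nonneg.2 hp₁
    simp only [shiftMean_apply]
    gcongr <;> exact hab _

lemma shiftMean_pow_apply_zero (p : ℝ) (a : ℕ → ℝ) (n : ℕ) :
    (shiftMean p ^ n) a 0 = ∑ ν ∈ range (n + 1), (bernsteinPolynomial ℝ n ν).eval p * a ν := by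
  have hc : Commute (p • LinearMap.funLeft ℝ ℝ Nat.succ)
      ((1 - p) • (1 : Module.End ℝ (ℕ → ℝ))) :=
    (Commute.one_right _).smul_right _ |>.smul_left _
  rw [shiftMean, hc.add_pow, LinearMap.sum_apply, Finset.sum_apply]
  refine Finset.sum_congr rfl fun ν _ => ?_
  simp only [_root_.smul_pow, one_pow, Algebra.smul_mul_assoc]
  simp [funLeft_succ_pow_apply, bernsteinPolynomial]
  ring

lemma le_shiftMean_pow {p : ℝ} (hp₀ : 0 ≤ p) (hp₁ : p ≤ 1) {x : ℕ → ℕ → ℝ}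
    (hx : ∀ n, x (n + 1) ≤ shiftMean p (x n)) (n : ℕ) : x n ≤ (shiftMean p ^ n) (x 0) := by
  refine (shiftMean_monotone hp₀ hp₁).seq_le_seq (y := fun k => (shiftMean p ^ k) (x 0)) n le_rfl
    (fun k _ => hx k) fun k _ => ?_
  simp only [Module.End.pow_apply, Function.iterate_succ_apply', le_rfl]

lemma eval_bernsteinPolynomial_nonneg {x : ℝ} (hx₀ : 0 ≤ x) (hx₁ : x ≤ 1) (n ν : ℕ) :
    0 ≤ (bernsteinPolynomial ℝ n ν).eval x := by
  have := sub_nonneg.2 hx₁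
  simp only [bernsteinPolynomial, eval_mul, eval_pow, eval_sub, eval_one, eval_X, eval_natCast]
  positivity

lemma sum_eval_bernsteinPolynomial (x : ℝ) (n : ℕ) :
    ∑ ν ∈ range (n + 1), (bernsteinPolynomial ℝ n ν).eval x = 1 := by
  simpa [eval_finsetSum] using congrArg (eval x) (bernsteinPolynomial.sum ℝ n)

lemma sum_eval_bernsteinPolynomial_variance (x : ℝ) (n : ℕ) :
    ∑ ν ∈ range (n + 1), (ν - n * x) ^ 2 * (bernsteinPolynomial ℝ n ν).eval x
      = n * x * (1 - x) := by
  have := congrArg (eval x) (bernsteinPolynomial.variance ℝ n)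
  simp only [eval_finsetSum, eval_mul, eval_pow, eval_sub, eval_X, eval_one,
    eval_natCast, nsmul_eq_mul] at this
  rw [← this]
  exact Finset.sum_congr rfl fun ν _ => by ring

lemma sum_eval_bernsteinPolynomial_far_le {x δ : ℝ} (hx₀ : 0 ≤ x) (hx₁ : x ≤ 1) (hδ : 0 < δ)
    (n : ℕ) :
    ∑ ν ∈ range (n + 1) with δ ≤ |((ν : ℕ) : ℝ) - n * x|, (bernsteinPolynomial ℝ n ν).eval x
      ≤ n * x * (1 - x) / δ ^ 2 := by
  rw [le_div_iff₀ (by positivity), ← sum_eval_bernsteinPolynomial_variance, Finset.sum_mul]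
  calc ∑ ν ∈ range (n + 1) with δ ≤ |((ν : ℕ) : ℝ) - n * x|,
        (bernsteinPolynomial ℝ n ν).eval x * δ ^ 2
      ≤ ∑ ν ∈ range (n + 1) with δ ≤ |((ν : ℕ) : ℝ) - n * x|,
          (ν - n * x) ^ 2 * (bernsteinPolynomial ℝ n ν).eval x := by
        refine Finset.sum_le_sum fun ν hν => ?_
        rw [mul_comm, ← sq_abs ((ν : ℝ) - n * x)]
        gcongr
        · exact eval_bernsteinPolynomial_nonneg hx₀ hx₁ n ν
        · exact (Finset.mem_filter.1 hν).2
    _ ≤ ∑ ν ∈ range (n + 1), (ν - n * x) ^ 2 * (bernsteinPolynomial ℝ n ν).eval x :=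
        Finset.sum_le_sum_of_subset_of_nonneg (Finset.filter_subset _ _) fun ν _ _ =>
          mul_nonneg (sq_nonneg _) (eval_bernsteinPolynomial_nonneg hx₀ hx₁ n ν)

lemma sum_eval_bernsteinPolynomial_mul_le {x δ c M : ℝ} (hx₀ : 0 ≤ x) (hx₁ : x ≤ 1)
    (hδ : 0 < δ) (hc : 0 ≤ c) (hM : 0 ≤ M) {n : ℕ} {f : ℕ → ℝ} (hfM : ∀ ν, f ν ≤ M)
    (hfc : ∀ ν : ℕ, |(ν : ℝ) - n * x| < δ → f ν ≤ c) :
    ∑ ν ∈ range (n + 1), (bernsteinPolynomial ℝ n ν).eval x * f ν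
      ≤ c + M * (n * x * (1 - x) / δ ^ 2) := by
  calc ∑ ν ∈ range (n + 1), (bernsteinPolynomial ℝ n ν).eval x * f ν
      ≤ ∑ ν ∈ range (n + 1), (bernsteinPolynomial ℝ n ν).eval x *
          (c + M * if δ ≤ |((ν : ℕ) : ℝ) - n * x| then 1 else 0) := by
        refine Finset.sum_le_sum fun ν _ => ?_
        refine mul_le_mul_of_nonneg_left ?_ (eval_bernsteinPolynomial_nonneg hx₀ hx₁ n ν)
        split_ifs with h
        · linarith [hfM ν]
        · simpa using hfc ν (not_le.1 h)
    _ = c + M * ∑ ν ∈ range (n + 1) with δ ≤ |((ν : ℕ) : ℝ) - n * x|,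
          (bernsteinPolynomial ℝ n ν).eval x := by
        simp only [mul_add, Finset.sum_add_distrib, ← Finset.sum_mul,
          sum_eval_bernsteinPolynomial, Finset.sum_filter, Finset.mul_sum]
        congr 1
        · ring
        · exact Finset.sum_congr rfl fun ν _ => by split_ifs <;> ring
    _ ≤ c + M * (n * x * (1 - x) / δ ^ 2) := by
        gcongr
        exact sum_eval_bernsteinPolynomial_far_le hx₀ hx₁ hδ n

/-- The `m`-th block is `{j | 4 ^ m ≤ j / p < 4 ^ (m + 1)}`; the value is `1` on even blocks and `2`
on odd ones. The binomial distribution `B(2 * 4 ^ m, p)` is concentrated near the middle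
`j = 2 * 4 ^ m * p` of block `m`. -/
noncomputable def blockSeq (p : ℝ) (j : ℕ) : ℝ :=
  if Even (Nat.log 4 ⌊j / p⌋₊) then 1 else 2

lemma blockSeq_pos (p : ℝ) (j : ℕ) : 0 < blockSeq p j := by
  unfold blockSeq; split_ifs <;> norm_num

lemma one_le_blockSeq (p : ℝ) (j : ℕ) : 1 ≤ blockSeq p j := by
  unfold blockSeq; split_ifs <;> norm_num

lemma blockSeq_le_two (p : ℝ) (j : ℕ) : blockSeq p j ≤ 2 := by
  unfold blockSeq; split_ifs <;> norm_num

lemma log_floor_div_eq_of_near {p : ℝ} (hp : 0 < p) {m ν : ℕ}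
    (hν : |(ν : ℝ) - ((2 * 4 ^ m : ℕ) : ℝ) * p| < 4 ^ m * p) : Nat.log 4 ⌊ν / p⌋₊ = m := by
  push_cast at hν
  obtain ⟨hlo, hhi⟩ := abs_lt.1 hν
  refine Nat.log_eq_of_pow_le_of_lt_pow ?_ ?_
  · refine Nat.le_floor ?_
    rw [le_div_iff₀ hp]
    push_cast
    linarith
  · refine (Nat.floor_lt (by positivity)).2 ?_
    rw [div_lt_iff₀ hp]
    have h4 : (4 : ℝ) ^ (m + 1) * p = 4 * (4 ^ m * p) := by ring
    push_cast
    linarith [mul_pos (pow_pos (show (0 : ℝ) < 4 by norm_num) m) hp]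

lemma blockSeq_eq_of_near {p : ℝ} (hp : 0 < p) {m ν : ℕ}
    (hν : |(ν : ℝ) - ((2 * 4 ^ m : ℕ) : ℝ) * p| < 4 ^ m * p) :
    blockSeq p ν = if Even m then 1 else 2 := by
  rw [blockSeq, log_floor_div_eq_of_near hp hν]

lemma variance_div_sq_le {p : ℝ} (hp₀ : 0 < p) {m : ℕ} (hm : 200 ≤ 4 ^ m * p) :
    ((2 * 4 ^ m : ℕ) : ℝ) * p * (1 - p) / (4 ^ m * p) ^ 2 ≤ 1 / 100 := by
  have h4 : (0 : ℝ) < 4 ^ m * p := by positivity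
  rw [div_le_iff₀ (by positivity)]
  push_cast
  nlinarith

lemma sum_bernstein_mul_blockSeq_le {p : ℝ} (hp₀ : 0 < p) (hp₁ : p ≤ 1) {m : ℕ} (hm : Even m)
    (hpm : 200 ≤ 4 ^ m * p) :
    ∑ ν ∈ range (2 * 4 ^ m + 1), (bernsteinPolynomial ℝ (2 * 4 ^ m) ν).eval p * blockSeq p ν
      ≤ 51 / 50 := by
  have key := sum_eval_bernsteinPolynomial_mul_le (n := 2 * 4 ^ m) (δ := 4 ^ m * p) hp₀.le hp₁
    (by positivity) zero_le_one zero_le_two (blockSeq_le_two p)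
    fun ν hν => (blockSeq_eq_of_near hp₀ hν).trans_le (by simp [hm])
  linarith [variance_div_sq_le hp₀ hpm]

lemma sum_bernstein_mul_inv_blockSeq_le {p : ℝ} (hp₀ : 0 < p) (hp₁ : p ≤ 1) {m : ℕ}
    (hm : ¬ Even m) (hpm : 200 ≤ 4 ^ m * p) :
    ∑ ν ∈ range (2 * 4 ^ m + 1),
        (bernsteinPolynomial ℝ (2 * 4 ^ m) ν).eval p * (blockSeq p ν)⁻¹ ≤ 51 / 100 := by
  have key := sum_eval_bernsteinPolynomial_mul_le (n := 2 * 4 ^ m) (δ := 4 ^ m * p) hp₀.le hp₁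
    (by positivity) (by norm_num : (0 : ℝ) ≤ 1 / 2) zero_le_one
    (fun ν => inv_le_one_of_one_le₀ (one_le_blockSeq p ν))
    fun ν hν => by simp [blockSeq_eq_of_near hp₀ hν, hm]
  linarith [variance_div_sq_le hp₀ hpm]

lemma not_tendsto_of_even_le_of_odd_ge {u : ℕ → ℝ} {a b L : ℝ} (hab : a < b)
    (h : ∀ᶠ m in atTop, (Even m → u m ≤ a) ∧ (¬ Even m → b ≤ u m)) :
    ¬ Tendsto u atTop (nhds L) := by
  intro hu
  have heven : Tendsto (fun i : ℕ => 2 * i) atTop atTop :=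
    StrictMono.tendsto_atTop fun i j hij => by omega
  have hodd : Tendsto (fun i : ℕ => 2 * i + 1) atTop atTop :=
    StrictMono.tendsto_atTop fun i j hij => by omega
  have hLa : L ≤ a := by
    refine le_of_tendsto (hu.comp heven) ?_
    filter_upwards [heven.eventually h] with i hi
    exact hi.1 (even_two_mul i)
  have hbL : b ≤ L := by
    refine ge_of_tendsto (hu.comp hodd) ?_
    filter_upwards [hodd.eventually h] with i hi
    exact hi.2 (Nat.not_even_iff_odd.2 (odd_two_mul_add_one i))
  linarith

def IsSandwichedMean (lam : ℝ) (g : ℝ → ℝ → ℝ) : Prop :=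
  ∀ s t : ℝ, 0 < s → 0 < t →
    ((1 - lam) * s⁻¹ + lam * t⁻¹)⁻¹ ≤ g s t ∧ g s t ≤ (1 - lam) * s + lam * t

section Iteration

variable {lam : ℝ} {g : ℝ → ℝ → ℝ} {γ : ℕ → ℕ → ℝ}

lemma weightedHarmonicMean_pos (hlam : lam ∈ Set.Ioo (0 : ℝ) 1) {s t : ℝ} (hs : 0 < s)
    (ht : 0 < t) : 0 < ((1 - lam) * s⁻¹ + lam * t⁻¹)⁻¹ := by
  have := sub_pos.2 hlam.2
  have := hlam.1
  positivity

lemma IsSandwichedMean.pos (hg : IsSandwichedMean lam g) (hlam : lam ∈ Set.Ioo (0 : ℝ) 1)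
    {s t : ℝ} (hs : 0 < s) (ht : 0 < t) : 0 < g s t :=
  (weightedHarmonicMean_pos hlam hs ht).trans_le (hg s t hs ht).1

lemma IsSandwichedMean.inv_le (hg : IsSandwichedMean lam g) (hlam : lam ∈ Set.Ioo (0 : ℝ) 1)
    {s t : ℝ} (hs : 0 < s) (ht : 0 < t) : (g s t)⁻¹ ≤ (1 - lam) * s⁻¹ + lam * t⁻¹ := by
  simpa using inv_anti₀ (weightedHarmonicMean_pos hlam hs ht) (hg s t hs ht).1

lemma iterate_pos (hg : IsSandwichedMean lam g) (hlam : lam ∈ Set.Ioo (0 : ℝ) 1)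
    (h0 : ∀ k, 0 < γ 0 k) (hrec : ∀ n k, γ (n + 1) k = g (γ n (k + 1)) (γ n k)) (n k : ℕ) :
    0 < γ n k := by
  induction n generalizing k with
  | zero => exact h0 k
  | succ n ih => rw [hrec]; exact hg.pos hlam (ih _) (ih _)

lemma iterate_le_shiftMean_pow (hg : IsSandwichedMean lam g) (hlam : lam ∈ Set.Ioo (0 : ℝ) 1)
    (h0 : ∀ k, 0 < γ 0 k) (hrec : ∀ n k, γ (n + 1) k = g (γ n (k + 1)) (γ n k)) (n : ℕ) :
    γ n ≤ (shiftMean (1 - lam) ^ n) (γ 0) := by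
  refine le_shiftMean_pow (by linarith [hlam.2]) (by linarith [hlam.1]) (fun n k => ?_) n
  rw [hrec, shiftMean_apply, sub_sub_cancel]
  exact (hg _ _ (iterate_pos hg hlam h0 hrec n _) (iterate_pos hg hlam h0 hrec n _)).2

lemma inv_iterate_le_shiftMean_pow (hg : IsSandwichedMean lam g)
    (hlam : lam ∈ Set.Ioo (0 : ℝ) 1) (h0 : ∀ k, 0 < γ 0 k)
    (hrec : ∀ n k, γ (n + 1) k = g (γ n (k + 1)) (γ n k)) (n : ℕ) :
    (γ n)⁻¹ ≤ (shiftMean (1 - lam) ^ n) (γ 0)⁻¹ := by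
  refine le_shiftMean_pow (x := fun n => (γ n)⁻¹) (by linarith [hlam.2]) (by linarith [hlam.1])
    (fun n k => ?_) n
  simp only [Pi.inv_apply, hrec, shiftMean_apply, sub_sub_cancel]
  exact hg.inv_le hlam (iterate_pos hg hlam h0 hrec n _) (iterate_pos hg hlam h0 hrec n _)

lemma iterate_le_of_even (hg : IsSandwichedMean lam g) (hlam : lam ∈ Set.Ioo (0 : ℝ) 1)
    (h0 : γ 0 = blockSeq (1 - lam)) (hrec : ∀ n k, γ (n + 1) k = g (γ n (k + 1)) (γ n k))
    {m : ℕ} (hm : Even m) (hlarge : 200 ≤ 4 ^ m * (1 - lam)) : γ (2 * 4 ^ m) 0 ≤ 51 / 50 := by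
  have hpos : ∀ k, 0 < γ 0 k := by simpa [h0] using blockSeq_pos (1 - lam)
  calc γ (2 * 4 ^ m) 0 ≤ (shiftMean (1 - lam) ^ (2 * 4 ^ m)) (γ 0) 0 :=
        iterate_le_shiftMean_pow hg hlam hpos hrec _ 0
    _ ≤ 51 / 50 := by
        rw [shiftMean_pow_apply_zero, h0]
        exact sum_bernstein_mul_blockSeq_le (sub_pos.2 hlam.2) (by linarith [hlam.1]) hm hlarge

lemma le_iterate_of_odd (hg : IsSandwichedMean lam g) (hlam : lam ∈ Set.Ioo (0 : ℝ) 1)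
    (h0 : γ 0 = blockSeq (1 - lam)) (hrec : ∀ n k, γ (n + 1) k = g (γ n (k + 1)) (γ n k))
    {m : ℕ} (hm : ¬ Even m) (hlarge : 200 ≤ 4 ^ m * (1 - lam)) :
    100 / 51 ≤ γ (2 * 4 ^ m) 0 := by
  have hpos : ∀ k, 0 < γ 0 k := by simpa [h0] using blockSeq_pos (1 - lam)
  have hinv : (γ (2 * 4 ^ m) 0)⁻¹ ≤ 51 / 100 :=
    calc (γ (2 * 4 ^ m) 0)⁻¹ ≤ (shiftMean (1 - lam) ^ (2 * 4 ^ m)) (γ 0)⁻¹ 0 :=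
          inv_iterate_le_shiftMean_pow hg hlam hpos hrec _ 0
      _ ≤ 51 / 100 := by
          rw [shiftMean_pow_apply_zero, h0]
          exact sum_bernstein_mul_inv_blockSeq_le (sub_pos.2 hlam.2) (by linarith [hlam.1]) hm
            hlarge
  rw [inv_le_comm₀ (iterate_pos hg hlam hpos hrec _ 0) (by norm_num)] at hinv
  norm_num at hinv ⊢
  exact hinv

end Iteration

end IteratedMean

open IteratedMean

/-- Let `λ ∈ (0,1)` and let `g` satisfy the sandwich condition
`((1−λ)s⁻¹ + λt⁻¹)⁻¹ ≤ g(s,t) ≤ (1−λ)s + λt` for all `s,t > 0`.  Then there is a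
bounded sequence `(α_j)` of positive reals such that the iteration
`γ_k⁽⁰⁾ = α_k`, `γ_k⁽ⁿ⁾ = g(γ_{k+1}⁽ⁿ⁻¹⁾, γ_k⁽ⁿ⁻¹⁾)` produces a non-convergent
sequence `(γ₀⁽ⁿ⁾)ₙ`. -/
theorem stmt_15 (lam : ℝ) (hlam : lam ∈ Set.Ioo (0 : ℝ) 1)
    (g : ℝ → ℝ → ℝ)
    (hg : ∀ s t : ℝ, 0 < s → 0 < t →
      ((1 - lam) * s⁻¹ + lam * t⁻¹)⁻¹ ≤ g s t ∧ g s t ≤ (1 - lam) * s + lam * t) :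
    ∃ α : ℕ → ℝ, (∀ j, 0 < α j) ∧ BddAbove (Set.range α) ∧
      ∀ γ : ℕ → ℕ → ℝ,
        (∀ k, γ 0 k = α k) →
        (∀ n k, γ (n + 1) k = g (γ n (k + 1)) (γ n k)) →
        ¬ ∃ L : ℝ, Tendsto (fun n : ℕ => γ n 0) atTop (nhds L) := by
  refine ⟨blockSeq (1 - lam), blockSeq_pos _,
    ⟨2, Set.forall_mem_range.2 (blockSeq_le_two _)⟩, ?_⟩
  rintro γ h0 hrec ⟨L, hL⟩
  have hN : Tendsto (fun m : ℕ => 2 * 4 ^ m) atTop atTop :=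
    StrictMono.tendsto_atTop fun i j hij => by
      simpa using Nat.pow_lt_pow_right (by norm_num : 1 < 4) hij
  have hlarge : ∀ᶠ m : ℕ in atTop, 200 ≤ 4 ^ m * (1 - lam) :=
    ((tendsto_pow_atTop_atTop_of_one_lt (by norm_num : (1 : ℝ) < 4)).atTop_mul_const
      (sub_pos.2 hlam.2)).eventually_ge_atTop 200
  refine not_tendsto_of_even_le_of_odd_ge (by norm_num : (51 / 50 : ℝ) < 100 / 51) ?_
    (hL.comp hN)
  filter_upwards [hlarge] with m hm
  exact ⟨fun he => iterate_le_of_even hg hlam (funext h0) hrec he hm,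
    fun ho => le_iterate_of_odd hg hlam (funext h0) hrec ho hm⟩
end

section
/- Let m ≥ 1 and let T be an invertible m×m complex matrix with polar decomposition T = U·P, where U is unitary and P = (T*T)^{1/2} has spectral decomposition P = Σ_{i=1}^{k} s_i E_i with s_i > 0 and Hermitian idempotent matrices E_i satisfying E_iE_j = 0 for i ≠ j and Σ_i E_i = I. Let φ, ψ : ℝ_{>0} × ℝ_{>0} → ℝ_{>0} be functions with φ(s,s) = ψ(s,s) = s for all s > 0, and suppose that for every m×m complex matrix X one has ‖ Σ_{i,j=1}^{k} φ(s_i,s_j) E_i X E_j ‖ ≤ ‖ Σ_{i,j=1}^{k} ψ(s_i,s_j) E_i X E_j ‖, where ‖·‖ is the operator norm with respect to the Euclidean norm on ℂ^m. Then the closure of the numerical range of Δ_φ(T) := Σ_{i,j} φ(s_i,s_j) E_i U E_j is contained in the closure of the numerical range of Δ_ψ(T) := Σ_{i,j} ψ(s_i,s_j) E_i U E_j. -/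
/-!
Choosing `X = U - z P⁻¹` in the norm hypothesis gives `‖Δ_φ(T) - z‖ ≤ ‖Δ_ψ(T) - z‖` for every
`z ∈ ℂ`: both transformers send `P⁻¹ = ∑ sᵢ⁻¹ Eᵢ` to the identity, since
`φ(sᵢ, sᵢ) = ψ(sᵢ, sᵢ) = sᵢ`.
It remains to see that the closure of a numerical range `W(A)` is the intersection of the discs
`|w - z| ≤ ‖A - z‖`. It lies in each of them. Conversely, `W(A)` is convex (Toeplitz–Hausdorff),
so a point outside its closure is strictly separated from it by a line; taking `z` far away on
the side of the line where `W(A)` lies gives a disc that misses the point.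
-/

open Matrix
open scoped ComplexOrder

/-- The numerical range of a complex matrix, w.r.t. the Euclidean inner product. -/
def numRange {m : ℕ} (M : Matrix (Fin m) (Fin m) ℂ) : Set ℂ :=
  {z : ℂ | ∃ x : EuclideanSpace ℂ (Fin m), ‖x‖ = 1 ∧
    (inner ℂ x (Matrix.toEuclideanCLM (𝕜 := ℂ) M x) : ℂ) = z}

open Set
open scoped ComplexConjugate InnerProductSpace

theorem Complex.exists_norm_eq_one_im_mul_eq_zero (w : ℂ) :
    ∃ μ : ℂ, ‖μ‖ = 1 ∧ (μ * w).im = 0 := by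
  refine ⟨Complex.exp (-(w.arg * Complex.I)), by simp [Complex.norm_exp], ?_⟩
  nth_rewrite 2 [← Complex.norm_mul_exp_arg_mul_I w]
  rw [mul_left_comm, ← Complex.exp_add, neg_add_cancel, Complex.exp_zero, mul_one]
  exact Complex.ofReal_im _

namespace ContinuousLinearMap

variable {H : Type*} [NormedAddCommGroup H] [InnerProductSpace ℂ H]

def numericalRange (A : H →L[ℂ] H) : Set ℂ :=
  {z : ℂ | ∃ x : H, ‖x‖ = 1 ∧ ⟪x, A x⟫_ℂ = z}

variable (A : H →L[ℂ] H)

theorem numericalRange_eq_empty [Subsingleton H] : A.numericalRange = ∅ :=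
  eq_empty_of_forall_notMem fun _ ⟨x, hx, _⟩ => by simp [Subsingleton.elim x 0] at hx

theorem inner_smul_apply_smul (c : ℂ) (x : H) :
    ⟪c • x, A (c • x)⟫_ℂ = (‖c‖ : ℂ) ^ 2 * ⟪x, A x⟫_ℂ := by
  rw [map_smul, inner_smul_left, inner_smul_right, ← mul_assoc, Complex.conj_mul']

theorem inner_div_norm_sq_mem_numericalRange {x : H} (hx : x ≠ 0) :
    ⟪x, A x⟫_ℂ / (‖x‖ : ℂ) ^ 2 ∈ A.numericalRange := by
  refine ⟨((‖x‖ : ℂ))⁻¹ • x, norm_smul_inv_norm hx, ?_⟩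
  rw [inner_smul_apply_smul, norm_inv, Complex.norm_real, Real.norm_of_nonneg (norm_nonneg x)]
  push_cast
  ring

theorem inner_sub_smul_one_apply {x : H} (hx : ‖x‖ = 1) (z : ℂ) :
    ⟪x, (A - z • 1) x⟫_ℂ = ⟪x, A x⟫_ℂ - z := by
  simp [inner_self_eq_norm_sq_to_K, hx]

theorem inner_apply_ofReal_smul_add (a b : ℝ) (x y : H) :
    ⟪(a : ℂ) • x + (b : ℂ) • y, A ((a : ℂ) • x + (b : ℂ) • y)⟫_ℂ =
      a ^ 2 * ⟪x, A x⟫_ℂ + b ^ 2 * ⟪y, A y⟫_ℂ + a * b * (⟪x, A y⟫_ℂ + ⟪y, A x⟫_ℂ) := by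
  simp only [map_add, map_smul, inner_add_left, inner_add_right, inner_smul_left,
    inner_smul_right, Complex.conj_ofReal]
  ring

theorem ofReal_mem_numericalRange_of_im_eq_zero {x y : H} (hx : ‖x‖ = 1) (hAx : ⟪x, A x⟫_ℂ = 1)
    (hy : ‖y‖ = 1) (hAy : ⟪y, A y⟫_ℂ = 0) (him : (⟪x, A y⟫_ℂ + ⟪y, A x⟫_ℂ).im = 0)
    {p : ℝ} (hp : p ∈ Icc (0 : ℝ) 1) : (p : ℂ) ∈ A.numericalRange := by
  -- along the segment from `x` to `y` the Rayleigh quotient is real (by `him`) and runs from 1 to 0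
  set u : ℝ → H := fun t => ((1 - t : ℝ) : ℂ) • x + (t : ℂ) • y with hu
  have hu_ne : ∀ t, u t ≠ 0 := by
    intro t h0
    -- `(1 - t) x = -t y` would give `(1 - t)² = t² ⟪y, A y⟫ = 0`
    have hxy := congrArg (fun v => ⟪v, A v⟫_ℂ) (eq_neg_of_add_eq_zero_left h0)
    simp only [map_neg, inner_neg_neg, inner_smul_apply_smul, hAx, hAy, mul_zero, mul_one,
      pow_eq_zero_iff two_ne_zero, Complex.ofReal_eq_zero, norm_eq_zero, sub_eq_zero] at hxy
    simp [hu, ← hxy] at h0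
    simp [h0] at hy
  set f : ℝ → ℂ := fun t => ⟪u t, A (u t)⟫_ℂ / (‖u t‖ : ℂ) ^ 2 with hf
  have hf_im : ∀ t, (f t).im = 0 := by
    intro t
    simp only [hf]
    rw [← Complex.ofReal_pow, Complex.div_ofReal_im, hu, inner_apply_ofReal_smul_add, hAx,
      hAy]
    simp only [mul_one, mul_zero, add_zero, Complex.add_im, ← Complex.ofReal_pow,
      Complex.ofReal_im, Complex.im_ofReal_mul, ← Complex.ofReal_mul, him, zero_div]
  have hf_cont : ContinuousOn (fun t => (f t).re) (Icc 0 1) :=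
    Complex.continuous_re.comp_continuousOn <| ContinuousOn.div (by fun_prop) (by fun_prop)
      fun t _ => by simpa using hu_ne t
  obtain ⟨t, -, ht⟩ := intermediate_value_Icc' zero_le_one hf_cont
    (by simpa [hf, hu, hx, hAx, hAy, hy] using hp)
  obtain ⟨v, hv, hvt⟩ := A.inner_div_norm_sq_mem_numericalRange (hu_ne t)
  exact ⟨v, hv, hvt.trans (Complex.ext ht (hf_im t))⟩

theorem ofReal_mem_numericalRange {x y : H} (hx : ‖x‖ = 1) (hAx : ⟪x, A x⟫_ℂ = 1)
    (hy : ‖y‖ = 1) (hAy : ⟪y, A y⟫_ℂ = 0) {p : ℝ} (hp : p ∈ Icc (0 : ℝ) 1) :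
    (p : ℂ) ∈ A.numericalRange := by
  -- rotating `x` by a phase `μ` makes `⟪x, A y⟫ + ⟪y, A x⟫` real
  obtain ⟨μ, hμ, him⟩ := Complex.exists_norm_eq_one_im_mul_eq_zero (⟪y, A x⟫_ℂ - conj ⟪x, A y⟫_ℂ)
  refine A.ofReal_mem_numericalRange_of_im_eq_zero (x := μ • x) ?_ ?_ hy hAy ?_ hp
  · rw [norm_smul, hμ, hx, one_mul]
  · rw [inner_smul_apply_smul, hμ, hAx]; norm_num
  · rw [map_smul, inner_smul_left, inner_smul_right]
    simp only [Complex.add_im, Complex.mul_im, Complex.sub_im, Complex.sub_re,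
      Complex.conj_re, Complex.conj_im] at him ⊢
    linarith

theorem convex_numericalRange : Convex ℝ A.numericalRange := by
  rintro _ ⟨x, hx, rfl⟩ _ ⟨y, hy, rfl⟩ p q hp hq hpq
  obtain hxy | hxy := eq_or_ne ⟪x, A x⟫_ℂ ⟪y, A y⟫_ℂ
  · exact ⟨y, hy, by rw [hxy, ← add_smul, hpq, one_smul]⟩
  -- `(A - b) / (a - b)` has `1` and `0` in its numerical range
  set d := ⟪x, A x⟫_ℂ - ⟪y, A y⟫_ℂ with hd_def
  have hd : d ≠ 0 := sub_ne_zero.mpr hxy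
  have hC : ∀ v : H, ‖v‖ = 1 →
      ⟪v, (d⁻¹ • (A - ⟪y, A y⟫_ℂ • 1)) v⟫_ℂ = d⁻¹ * (⟪v, A v⟫_ℂ - ⟪y, A y⟫_ℂ) := fun v hv => by
    rw [_root_.smul_apply, inner_smul_right, A.inner_sub_smul_one_apply hv]
  obtain ⟨v, hv, hvp⟩ := ofReal_mem_numericalRange _ hx (by rw [hC x hx, inv_mul_cancel₀ hd])
    hy (by rw [hC y hy, sub_self, mul_zero]) ⟨hp, by linarith⟩
  refine ⟨v, hv, ?_⟩
  rw [hC v hv, inv_mul_eq_iff_eq_mul₀ hd, hd_def] at hvp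
  obtain rfl : q = 1 - p := by linarith
  rw [Complex.real_smul, Complex.real_smul]
  push_cast
  linear_combination hvp

theorem norm_inner_apply_le {x : H} (hx : ‖x‖ = 1) : ‖⟪x, A x⟫_ℂ‖ ≤ ‖A‖ :=
  calc ‖⟪x, A x⟫_ℂ‖ ≤ ‖x‖ * ‖A x‖ := norm_inner_le_norm _ _
    _ ≤ ‖x‖ * (‖A‖ * ‖x‖) := by gcongr; exact A.le_opNorm x
    _ = ‖A‖ := by rw [hx, one_mul, mul_one]

theorem closure_numericalRange_subset_closedBall (z : ℂ) :
    closure A.numericalRange ⊆ Metric.closedBall z ‖A - z • 1‖ := by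
  refine closure_minimal ?_ Metric.isClosed_closedBall
  rintro _ ⟨x, hx, rfl⟩
  rw [Metric.mem_closedBall, dist_eq_norm, ← A.inner_sub_smul_one_apply hx]
  exact (A - z • 1).norm_inner_apply_le hx

theorem re_inner_apply_smul (c : ℂ) (x : H) :
    RCLike.re ⟪A x, c • x⟫_ℂ = ⟪c, ⟪x, A x⟫_ℂ⟫_ℝ := by
  rw [inner_smul_right, ← inner_conj_symm, Complex.inner]
  simp only [RCLike.re_to_complex, Complex.mul_re, Complex.conj_re, Complex.conj_im]
  ring

theorem norm_add_smul_one_apply_sq_le {c : ℂ} {u t : ℝ} (ht : 0 ≤ t)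
    (hu : ∀ ζ ∈ A.numericalRange, ⟪c, ζ⟫_ℝ ≤ u) {x : H} (hx : ‖x‖ = 1) :
    ‖(A + (t * c) • 1) x‖ ^ 2 ≤ ‖A‖ ^ 2 + 2 * t * u + t ^ 2 * ‖c‖ ^ 2 := by
  have hAx : ‖A x‖ ≤ ‖A‖ := by simpa [hx] using A.le_opNorm x
  have hcx : ⟪t * c, ⟪x, A x⟫_ℂ⟫_ℝ ≤ t * u := by
    rw [← Complex.real_smul, real_inner_smul_left]
    exact mul_le_mul_of_nonneg_left (hu _ ⟨x, hx, rfl⟩) ht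
  rw [_root_.add_apply, _root_.smul_apply, one_apply_eq_self, norm_add_sq (𝕜 := ℂ),
    re_inner_apply_smul, norm_smul, hx, norm_mul, Complex.norm_real, Real.norm_of_nonneg ht]
  nlinarith [norm_nonneg (A x)]

theorem exists_norm_sub_smul_one_lt_dist [Nontrivial H] {w : ℂ}
    (hw : w ∉ closure A.numericalRange) : ∃ z : ℂ, ‖A - z • 1‖ < dist w z := by
  obtain ⟨f, u, hfA, hfw⟩ := geometric_hahn_banach_closed_point
    A.convex_numericalRange.closure isClosed_closure hw
  set c := (InnerProductSpace.toDual ℝ ℂ).symm f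
  have hc : ∀ ζ, ⟪c, ζ⟫_ℝ = f ζ := fun ζ => InnerProductSpace.toDual_symm_apply
  have hcA : ∀ ζ ∈ A.numericalRange, ⟪c, ζ⟫_ℝ ≤ u := fun ζ hζ =>
    (hc ζ ▸ hfA ζ (subset_closure hζ)).le
  -- `t` is large enough that the gain `2 t (f w - u)` beats `‖A‖ ^ 2`
  set t := (‖A‖ ^ 2 + 1) / (2 * (f w - u))
  have ht : 2 * t * (f w - u) = ‖A‖ ^ 2 + 1 := by
    have : f w - u ≠ 0 := (sub_pos.mpr hfw).ne'
    simp only [t]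
    field_simp
  set M := ‖A‖ ^ 2 + 2 * t * u + t ^ 2 * ‖c‖ ^ 2
  have hAt : ∀ x : H, ‖x‖ = 1 → ‖(A - (-(t * c)) • 1) x‖ ^ 2 ≤ M := fun x hx => by
    rw [neg_smul, sub_neg_eq_add]
    exact A.norm_add_smul_one_apply_sq_le (by positivity) hcA hx
  obtain ⟨x₀, hx₀⟩ := exists_norm_eq H zero_le_one
  have hM : 0 ≤ M := (sq_nonneg _).trans (hAt x₀ hx₀)
  refine ⟨-(t * c), (opNorm_le_of_unit_norm (Real.sqrt_nonneg M)
    fun x hx => Real.le_sqrt_of_sq_le (hAt x hx)).trans_lt ?_⟩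
  rw [Real.sqrt_lt hM dist_nonneg, dist_eq_norm, sub_neg_eq_add, norm_add_sq_real, real_inner_comm,
    ← Complex.real_smul, real_inner_smul_left, hc, norm_smul, Real.norm_of_nonneg ?_]
  · nlinarith [sq_nonneg ‖w‖]
  · positivity

theorem closure_numericalRange_subset_of_norm_sub_smul_one_le {A B : H →L[ℂ] H}
    (h : ∀ z : ℂ, ‖A - z • 1‖ ≤ ‖B - z • 1‖) :
    closure A.numericalRange ⊆ closure B.numericalRange := by
  intro w hw
  by_contra hwB
  obtain hH | hH := subsingleton_or_nontrivial H
  · simp [numericalRange_eq_empty] at hw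
  · obtain ⟨z, hz⟩ := B.exists_norm_sub_smul_one_lt_dist hwB
    exact (A.closure_numericalRange_subset_closedBall z hw).not_gt ((h z).trans_lt hz)

end ContinuousLinearMap

section SchurMultiplier

variable {ι R A : Type*} [Fintype ι] [CommRing R] [Ring A] [Algebra R A]

-- the paper's transformer `𝔐_φ` is `schurMultiplier (fun i j => φ (s i) (s j)) E`
def schurMultiplier (c : ι → ι → R) (E : ι → A) : A →ₗ[R] A where
  toFun X := ∑ i, ∑ j, c i j • (E i * X * E j)
  map_add' X Y := by simp only [mul_add, add_mul, smul_add, Finset.sum_add_distrib]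
  map_smul' r X := by simp only [mul_smul_comm, smul_mul_assoc, smul_comm r, Finset.smul_sum,
    RingHom.id_apply]

theorem schurMultiplier_apply (c : ι → ι → R) (E : ι → A) (X : A) :
    schurMultiplier c E X = ∑ i, ∑ j, c i j • (E i * X * E j) :=
  rfl

variable {E : ι → A}

theorem mul_sum_smul_mul [DecidableEq ι] (hidem : ∀ i, E i * E i = E i)
    (horth : ∀ i j, i ≠ j → E i * E j = 0) (d : ι → R) (i j : ι) :
    E i * (∑ l, d l • E l) * E j = if i = j then d i • E i else 0 := by
  rw [Finset.mul_sum, Finset.sum_mul, Finset.sum_eq_single i]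
  · split_ifs with hij
    · rw [← hij, mul_smul_comm, smul_mul_assoc, hidem, hidem]
    · rw [mul_smul_comm, smul_mul_assoc, hidem, horth i j hij, smul_zero]
  · intro l _ hli
    rw [mul_smul_comm, horth i l (Ne.symm hli), smul_zero, zero_mul]
  · exact fun hi => absurd (Finset.mem_univ i) hi

theorem schurMultiplier_sum_smul (hidem : ∀ i, E i * E i = E i)
    (horth : ∀ i j, i ≠ j → E i * E j = 0) (c : ι → ι → R) (d : ι → R) :
    schurMultiplier c E (∑ l, d l • E l) = ∑ i, (c i i * d i) • E i := by
  classical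
  simp only [schurMultiplier_apply, mul_sum_smul_mul hidem horth, smul_ite, smul_zero,
    Finset.sum_ite_eq, Finset.mem_univ, if_true, smul_smul]

theorem schurMultiplier_sub_smul_sum (hidem : ∀ i, E i * E i = E i)
    (horth : ∀ i j, i ≠ j → E i * E j = 0) (hsum : ∑ i, E i = 1) {c : ι → ι → R} {d : ι → R}
    (hcd : ∀ i, c i i * d i = 1) (X : A) (z : R) :
    schurMultiplier c E (X - z • ∑ l, d l • E l) = schurMultiplier c E X - z • 1 := by
  rw [map_sub, map_smul, schurMultiplier_sum_smul hidem horth]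
  simp only [hcd, one_smul, hsum]

end SchurMultiplier

theorem numRange_eq_numericalRange {m : ℕ} (M : Matrix (Fin m) (Fin m) ℂ) :
    numRange M = (toEuclideanCLM (𝕜 := ℂ) M).numericalRange :=
  rfl

theorem stmt_16_general (m : ℕ)
    (U : Matrix (Fin m) (Fin m) ℂ)
    (k : ℕ) (s : Fin k → ℝ) (hs : ∀ i, 0 < s i)
    (E : Fin k → Matrix (Fin m) (Fin m) ℂ)
    (hEidem : ∀ i, E i * E i = E i)
    (hEorth : ∀ i j, i ≠ j → E i * E j = 0) (hEsum : ∑ i, E i = 1)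
    (φ ψ : ℝ → ℝ → ℝ)
    (hφdiag : ∀ s' : ℝ, 0 < s' → φ s' s' = s')
    (hψdiag : ∀ s' : ℝ, 0 < s' → ψ s' s' = s')
    (hnorm : ∀ X : Matrix (Fin m) (Fin m) ℂ,
      ‖Matrix.toEuclideanCLM (𝕜 := ℂ)
          (∑ i, ∑ j, (φ (s i) (s j) : ℂ) • (E i * X * E j))‖ ≤
        ‖Matrix.toEuclideanCLM (𝕜 := ℂ)
          (∑ i, ∑ j, (ψ (s i) (s j) : ℂ) • (E i * X * E j))‖) :
    closure (numRange (∑ i, ∑ j, (φ (s i) (s j) : ℂ) • (E i * U * E j))) ⊆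
      closure (numRange (∑ i, ∑ j, (ψ (s i) (s j) : ℂ) • (E i * U * E j))) := by
  have hshift : ∀ χ : ℝ → ℝ → ℝ, (∀ s' : ℝ, 0 < s' → χ s' s' = s') → ∀ z : ℂ,
      schurMultiplier (fun i j => (χ (s i) (s j) : ℂ)) E (U - z • ∑ l, (s l : ℂ)⁻¹ • E l) =
        schurMultiplier (fun i j => (χ (s i) (s j) : ℂ)) E U - z • 1 := fun χ hχ =>
    schurMultiplier_sub_smul_sum hEidem hEorth hEsum (fun i => by
      rw [hχ _ (hs i), mul_inv_cancel₀ (Complex.ofReal_ne_zero.mpr (hs i).ne')]) U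
  rw [numRange_eq_numericalRange, numRange_eq_numericalRange]
  refine ContinuousLinearMap.closure_numericalRange_subset_of_norm_sub_smul_one_le fun z => ?_
  have h := hnorm (U - z • ∑ l, (s l : ℂ)⁻¹ • E l)
  rwa [← schurMultiplier_apply, ← schurMultiplier_apply, hshift φ hφdiag, hshift ψ hψdiag,
    map_sub, map_sub, map_smul, map_one] at h

/-- With `T = U·P` the polar decomposition of an invertible matrix,
`P = Σᵢ sᵢ Eᵢ` a spectral decomposition, and positive functions `φ, ψ` with
`φ(s,s) = ψ(s,s) = s` such that the associated double-operator-integral transformers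
satisfy `‖Σᵢⱼ φ(sᵢ,sⱼ)EᵢXEⱼ‖ ≤ ‖Σᵢⱼ ψ(sᵢ,sⱼ)EᵢXEⱼ‖` (spectral norm) for all `X`,
the closure of the numerical range of `Δ_φ(T) = Σᵢⱼ φ(sᵢ,sⱼ)EᵢUEⱼ` is contained in
that of `Δ_ψ(T) = Σᵢⱼ ψ(sᵢ,sⱼ)EᵢUEⱼ`. -/
theorem stmt_16 (m : ℕ) (hm : 1 ≤ m) (T : Matrix (Fin m) (Fin m) ℂ) (hT : IsUnit T.det)
    (U P : Matrix (Fin m) (Fin m) ℂ)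
    (hU : U ∈ Matrix.unitaryGroup (Fin m) ℂ)
    (hP : P.PosSemidef) (hP2 : P * P = Tᴴ * T) (hpolar : T = U * P)
    (k : ℕ) (s : Fin k → ℝ) (hs : ∀ i, 0 < s i)
    (E : Fin k → Matrix (Fin m) (Fin m) ℂ)
    (hEherm : ∀ i, (E i).IsHermitian) (hEidem : ∀ i, E i * E i = E i)
    (hEorth : ∀ i j, i ≠ j → E i * E j = 0) (hEsum : ∑ i, E i = 1)
    (hPdec : P = ∑ i, (s i : ℂ) • E i)
    (φ ψ : ℝ → ℝ → ℝ)
    (hφpos : ∀ s' t' : ℝ, 0 < s' → 0 < t' → 0 < φ s' t')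
    (hψpos : ∀ s' t' : ℝ, 0 < s' → 0 < t' → 0 < ψ s' t')
    (hφdiag : ∀ s' : ℝ, 0 < s' → φ s' s' = s')
    (hψdiag : ∀ s' : ℝ, 0 < s' → ψ s' s' = s')
    (hnorm : ∀ X : Matrix (Fin m) (Fin m) ℂ,
      ‖Matrix.toEuclideanCLM (𝕜 := ℂ)
          (∑ i, ∑ j, (φ (s i) (s j) : ℂ) • (E i * X * E j))‖ ≤
        ‖Matrix.toEuclideanCLM (𝕜 := ℂ)
          (∑ i, ∑ j, (ψ (s i) (s j) : ℂ) • (E i * X * E j))‖) :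
    closure (numRange (∑ i, ∑ j, (φ (s i) (s j) : ℂ) • (E i * U * E j))) ⊆
      closure (numRange (∑ i, ∑ j, (ψ (s i) (s j) : ℂ) • (E i * U * E j))) :=
  stmt_16_general m U k s hs E hEidem hEorth hEsum φ ψ hφdiag hψdiag hnorm
end
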